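/- arXiv:1812.01876 — 5 statements merged into one kernel-verified Lean document; each statement's English description precedes it below -/
import Mathlib

section
/- Let (X,d,μ) be a metric measure space, let 1 < p < ∞ and let q = p/(p-1) be the conjugate exponent. Suppose C ≥ 0 is a constant such that ‖M^u_μ h‖_{L^q(μ)} ≤ C‖h‖_{L^q(μ)} for every h ∈ L^q(μ). Then for every finite sequence of closed balls B^cl(x_n, r_n), 1 ≤ n ≤ N, with μ(B^cl(x_n, r_n)) > 0, every finite sequence of weights w_n > 0, and every finite sequence of dilations t_n ≥ 1, one has ‖ Σ_{n=1}^N w_n · 1_{B^cl(x_n, t_n r_n)} / μ(B^cl(x_n, t_n r_n)) ‖_{L^p(μ)} ≤ C · ‖ Σ_{n=1}^N w_n · 1_{B^cl(x_n, r_n)} / μ(B^cl(x_n, r_n)) ‖_{L^p(μ)}. -/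
/-! Duality with the maximal inequality on `L^q`. Let `F = Σ wₙ 1_{B'ₙ} / μ(B'ₙ)` be the sum over
the dilated balls `B'ₙ ⊇ Bₙ`, `G` the same sum over the balls `Bₙ`, and `g = F^(p-1)`, so that
`‖g‖_q^q = ‖F‖_p^p`. Then `‖F‖_p^p = ∫ F g = Σ wₙ ⨍_{B'ₙ} g`. Every point of `Bₙ` lies in `B'ₙ`, so
`⨍_{B'ₙ} g ≤ M g` on `Bₙ`, hence `⨍_{B'ₙ} g ≤ ⨍_{Bₙ} M g`. Summing,
`‖F‖_p^p ≤ ∫ G · M g ≤ ‖G‖_p ‖M g‖_q ≤ C ‖G‖_p ‖F‖_p^(p/q)`, and dividing by `‖F‖_p^(p/q)` gives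
the claim. -/

open MeasureTheory Metric ENNReal Set

noncomputable section

/-- The uncentered Hardy–Littlewood maximal operator
`M^u_μ g(x) = sup { (1/μ(B^cl(y,r))) ∫_{B^cl(y,r)} |g| dμ : r > 0, d(x,y) < r, μ(B^cl(y,r)) > 0 }`. -/
def uncenteredMaximal {X : Type*} [MetricSpace X] [MeasurableSpace X]
    (μ : Measure X) (g : X → ℝ) (x : X) : ℝ≥0∞ :=
  ⨆ (y : X) (r : ℝ) (_ : 0 < r) (_ : dist x y < r) (_ : 0 < μ (closedBall y r)),
    (∫⁻ z in closedBall y r, ‖g z‖₊ ∂μ) / μ (closedBall y r)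

/-- The `L^p(μ)` norm of a nonnegative (extended-real-valued) function. -/
def lpNorm {X : Type*} [MeasurableSpace X] (μ : Measure X) (p : ℝ) (F : X → ℝ≥0∞) : ℝ≥0∞ :=
  (∫⁻ x, F x ^ p ∂μ) ^ (1 / p)

open Filter Topology

section UncenteredMaximal

variable {X : Type*} [MetricSpace X] [MeasurableSpace X] (μ : Measure X)

lemma lowerSemicontinuous_uncenteredMaximal (g : X → ℝ) :
    LowerSemicontinuous (uncenteredMaximal μ g) := by
  refine lowerSemicontinuous_iff_isOpen_preimage.2 fun a => ?_
  have : uncenteredMaximal μ g ⁻¹' Ioi a =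
      ⋃ (y : X) (r : ℝ) (_ : 0 < r ∧ 0 < μ (closedBall y r) ∧
        a < (∫⁻ z in closedBall y r, ‖g z‖₊ ∂μ) / μ (closedBall y r)), ball y r := by
    ext z
    simp only [mem_preimage, mem_Ioi, uncenteredMaximal, lt_iSup_iff, mem_iUnion, mem_ball,
      exists_prop]
    grind
  rw [this]
  exact isOpen_iUnion fun y => isOpen_iUnion fun r => isOpen_iUnion fun _ => isOpen_ball

lemma setLAverage_closedBall_le_uncenteredMaximal [OpensMeasurableSpace X] (g : X → ℝ)
    {y z : X} {R : ℝ} (hfin : ∀ r, μ (closedBall y r) ≠ ∞) (hpos : 0 < μ (closedBall y R))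
    (hz : dist z y ≤ R) :
    ⨍⁻ u in closedBall y R, ‖g u‖₊ ∂μ ≤ uncenteredMaximal μ g z := by
  -- `z` may lie on the boundary sphere, while the maximal function only sees balls containing `z`
  -- in their interior: approximate by radii `r ↓ R`, using continuity of `μ` from above.
  set I := ∫⁻ u in closedBall y R, ‖g u‖₊ ∂μ
  have hμ : Tendsto (fun r => μ (closedBall y r)) (𝓝[>] R) (𝓝 (μ (closedBall y R))) := by
    simpa only [biInter_gt_closedBall, Function.comp_def] using tendsto_measure_biInter_gt (μ := μ)
      (fun r _ => measurableSet_closedBall.nullMeasurableSet)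
      (fun _ _ _ hij => closedBall_subset_closedBall hij) ⟨R + 1, by linarith, hfin _⟩
  rw [setLAverage_eq]
  refine le_of_tendsto (ENNReal.Tendsto.const_div hμ (.inl (hfin R))) ?_
  filter_upwards [self_mem_nhdsWithin] with r (hr : R < r)
  have hsub : closedBall y R ⊆ closedBall y r := closedBall_subset_closedBall hr.le
  calc I / μ (closedBall y r) ≤ (∫⁻ u in closedBall y r, ‖g u‖₊ ∂μ) / μ (closedBall y r) := by
        gcongr ?_ / _
        exact lintegral_mono_set hsub
    _ ≤ uncenteredMaximal μ g z :=
        le_iSup₂_of_le y r <| le_iSup₂_of_le (by linarith [dist_nonneg (x := z) (y := y)])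
          (by linarith) <| le_iSup_of_le (hpos.trans_le (measure_mono hsub)) le_rfl

lemma setLAverage_closedBall_le_setLAverage_uncenteredMaximal [OpensMeasurableSpace X]
    (g : X → ℝ) {y : X} {r R : ℝ} (hrR : r ≤ R) (hfin : ∀ s, μ (closedBall y s) ≠ ∞)
    (hpos : 0 < μ (closedBall y r)) :
    ⨍⁻ u in closedBall y R, ‖g u‖₊ ∂μ ≤ ⨍⁻ u in closedBall y r, uncenteredMaximal μ g u ∂μ :=
  calc ⨍⁻ u in closedBall y R, ‖g u‖₊ ∂μ
      = ⨍⁻ _ in closedBall y r, ⨍⁻ u in closedBall y R, ‖g u‖₊ ∂μ ∂μ :=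
        (setLAverage_const hpos.ne' (hfin r) _).symm
    _ ≤ ⨍⁻ u in closedBall y r, uncenteredMaximal μ g u ∂μ := by
        refine laverage_mono_ae (ae_restrict_of_forall_mem measurableSet_closedBall fun z hz => ?_)
        exact setLAverage_closedBall_le_uncenteredMaximal μ g hfin
          (hpos.trans_le (measure_mono (closedBall_subset_closedBall hrR)))
          ((mem_closedBall.1 hz).trans hrR)

end UncenteredMaximal

lemma sum_indicator_ne_top {α ι : Type*} [Fintype ι] {S : ι → Set α} {c : ι → ℝ≥0∞}
    (hc : ∀ i, c i ≠ ∞) (y : α) : ∑ i, (S i).indicator (fun _ => c i) y ≠ ∞ :=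
  sum_ne_top.2 fun i _ => ne_top_of_le_ne_top (hc i) (indicator_le_self _ _ y)

section IndicatorSums

variable {α ι : Type*} [MeasurableSpace α] [Fintype ι] (μ : Measure α) {S : ι → Set α}

lemma lintegral_sum_indicator_div_measure_mul (hS : ∀ i, MeasurableSet (S i)) (a : ι → ℝ≥0∞)
    {h : α → ℝ≥0∞} (hh : Measurable h) :
    ∫⁻ y, (∑ i, (S i).indicator (fun _ => a i / μ (S i)) y) * h y ∂μ
      = ∑ i, a i * ⨍⁻ y in S i, h y ∂μ := by
  simp only [Finset.sum_mul, ← indicator_mul_left]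
  rw [lintegral_finsetSum _ fun i _ => (hh.const_mul _).indicator (hS i)]
  refine Finset.sum_congr rfl fun i _ => ?_
  rw [lintegral_indicator (hS i), lintegral_const_mul _ hh, setLAverage_eq]
  simp only [div_eq_mul_inv]
  ring

lemma lintegral_sum_indicator_rpow_ne_top (hS : ∀ i, MeasurableSet (S i))
    (hμS : ∀ i, μ (S i) ≠ ∞) {c : ι → ℝ≥0∞} (hc : ∀ i, c i ≠ ∞) {p : ℝ} (hp : 0 < p) :
    ∫⁻ y, (∑ i, (S i).indicator (fun _ => c i) y) ^ p ∂μ ≠ ∞ := by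
  have hle : ∀ y, (∑ i, (S i).indicator (fun _ => c i) y) ^ p
      ≤ (⋃ i, S i).indicator (fun _ => (∑ i, c i) ^ p) y := by
    intro y
    by_cases hy : y ∈ ⋃ i, S i
    · rw [indicator_of_mem hy]
      gcongr with i
      exact indicator_le_self _ _ y
    · simp_all [ENNReal.zero_rpow_of_pos hp]
  refine ne_top_of_le_ne_top ?_ (lintegral_mono hle)
  rw [lintegral_indicator_const (MeasurableSet.iUnion hS)]
  have hμU : μ (⋃ i, S i) ≠ ∞ := ((measure_iUnion_fintype_le μ S).trans_lt
    (ENNReal.sum_lt_top.2 fun i _ => (hμS i).lt_top)).ne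
  exact mul_ne_top (rpow_ne_top_of_nonneg hp.le (sum_ne_top.2 fun i _ => hc i)) hμU

end IndicatorSums

lemma rpow_one_div_le_of_le_mul_rpow_one_div {A K : ℝ≥0∞} {p q : ℝ} (hpq : p.HolderConjugate q)
    (hA : A ≠ ∞) (h : A ≤ K * A ^ (1 / q)) : A ^ (1 / p) ≤ K := by
  rcases eq_or_ne A 0 with rfl | hA0
  · rw [ENNReal.zero_rpow_of_pos hpq.one_div_pos]
    exact zero_le
  rw [show 1 / p = 1 - 1 / q by linarith [hpq.one_div_add_one_div], ENNReal.rpow_sub _ _ hA0 hA,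
    ENNReal.rpow_one]
  exact ENNReal.div_le_of_le_mul h

section DualTestFunction

variable {α : Type*} [MeasurableSpace α] (μ : Measure α) {F : α → ℝ≥0∞} {p q : ℝ}

lemma lintegral_enorm_toReal_rpow_sub_one_rpow (hpq : p.HolderConjugate q) (hF : ∀ y, F y ≠ ∞) :
    ∫⁻ y, (‖(F y ^ (p - 1)).toReal‖₊ : ℝ≥0∞) ^ q ∂μ = ∫⁻ y, F y ^ p ∂μ := by
  refine lintegral_congr fun y => ?_
  rw [← enorm_eq_nnnorm, Real.enorm_toReal (rpow_ne_top_of_nonneg hpq.sub_one_pos.le (hF y)),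
    ← ENNReal.rpow_mul, hpq.sub_one_mul_conj]

lemma lintegral_rpow_eq_lintegral_mul_enorm_toReal_rpow_sub_one (hp : 1 ≤ p)
    (hF : ∀ y, F y ≠ ∞) :
    ∫⁻ y, F y ^ p ∂μ = ∫⁻ y, F y * ‖(F y ^ (p - 1)).toReal‖₊ ∂μ := by
  refine lintegral_congr fun y => ?_
  rw [← enorm_eq_nnnorm, Real.enorm_toReal (rpow_ne_top_of_nonneg (by linarith) (hF y))]
  conv_lhs => rw [← add_sub_cancel 1 p, ENNReal.rpow_add_of_nonneg _ _ zero_le_one (by linarith),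
    ENNReal.rpow_one]

lemma memLp_toReal_rpow_sub_one (hpq : p.HolderConjugate q) (hFm : Measurable F)
    (hF : ∀ y, F y ≠ ∞) (hFp : ∫⁻ y, F y ^ p ∂μ ≠ ∞) :
    MemLp (fun y => (F y ^ (p - 1)).toReal) (ENNReal.ofReal q) μ := by
  have hq : ENNReal.ofReal q ≠ 0 := (ENNReal.ofReal_pos.2 hpq.symm.pos).ne'
  refine ⟨(hFm.pow_const _).ennreal_toReal.aestronglyMeasurable,
    (eLpNorm_lt_top_iff_lintegral_rpow_enorm_lt_top hq ofReal_ne_top).2 ?_⟩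
  simp only [toReal_ofReal hpq.symm.nonneg, enorm_eq_nnnorm]
  exact (lintegral_enorm_toReal_rpow_sub_one_rpow μ hpq hF).trans_lt hFp.lt_top

end DualTestFunction

lemma lpNorm_le_mul_of_lintegral_rpow_le_lintegral_mul {α : Type*} [MeasurableSpace α]
    {μ : Measure α} {p q : ℝ} (hpq : p.HolderConjugate q) {C : ℝ≥0∞}
    (T : (α → ℝ) → α → ℝ≥0∞) (hTm : ∀ h, AEMeasurable (T h) μ)
    (hT : ∀ h : α → ℝ, MemLp h (ENNReal.ofReal q) μ →
      lpNorm μ q (T h) ≤ C * lpNorm μ q (fun x => (‖h x‖₊ : ℝ≥0∞)))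
    {F G : α → ℝ≥0∞} (hFm : Measurable F) (hGm : AEMeasurable G μ) (hF : ∀ y, F y ≠ ∞)
    (hFp : ∫⁻ y, F y ^ p ∂μ ≠ ∞)
    (hFG : ∫⁻ y, F y ^ p ∂μ ≤ ∫⁻ y, G y * T (fun y => (F y ^ (p - 1)).toReal) y ∂μ) :
    lpNorm μ p F ≤ C * lpNorm μ p G := by
  set g : α → ℝ := fun y => (F y ^ (p - 1)).toReal
  refine rpow_one_div_le_of_le_mul_rpow_one_div hpq hFp ?_
  calc ∫⁻ y, F y ^ p ∂μ ≤ ∫⁻ y, G y * T g y ∂μ := hFG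
    _ ≤ lpNorm μ p G * lpNorm μ q (T g) := ENNReal.lintegral_mul_le_Lp_mul_Lq μ hpq hGm (hTm g)
    _ ≤ lpNorm μ p G * (C * (∫⁻ y, F y ^ p ∂μ) ^ (1 / q)) := by
        rw [← lintegral_enorm_toReal_rpow_sub_one_rpow μ hpq hF]
        gcongr
        exact hT g (memLp_toReal_rpow_sub_one μ hpq hFm hF hFp)
    _ = C * lpNorm μ p G * (∫⁻ y, F y ^ p ∂μ) ^ (1 / q) := by ring

lemma lintegral_sum_indicator_closedBall_mul_le_uncenteredMaximal {X ι : Type*} [MetricSpace X]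
    [MeasurableSpace X] [OpensMeasurableSpace X] [Fintype ι] (μ : Measure X)
    {x : ι → X} {r R : ι → ℝ} (hrR : ∀ i, r i ≤ R i) (hfin : ∀ i s, μ (closedBall (x i) s) ≠ ∞)
    (hpos : ∀ i, 0 < μ (closedBall (x i) (r i))) (a : ι → ℝ≥0∞) {g : X → ℝ} (hg : Measurable g) :
    ∫⁻ y, (∑ i, (closedBall (x i) (R i)).indicator
        (fun _ => a i / μ (closedBall (x i) (R i))) y) * ‖g y‖₊ ∂μ
      ≤ ∫⁻ y, (∑ i, (closedBall (x i) (r i)).indicator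
        (fun _ => a i / μ (closedBall (x i) (r i))) y) * uncenteredMaximal μ g y ∂μ := by
  rw [lintegral_sum_indicator_div_measure_mul μ (fun _ => measurableSet_closedBall) a (by fun_prop),
    lintegral_sum_indicator_div_measure_mul μ (fun _ => measurableSet_closedBall) a
      (lowerSemicontinuous_uncenteredMaximal μ g).measurable]
  gcongr with i
  exact setLAverage_closedBall_le_setLAverage_uncenteredMaximal μ g (hrR i) (hfin i) (hpos i)

theorem normalized_boman_covering_general
    {X : Type*} [MetricSpace X] [MeasurableSpace X] [BorelSpace X]
    (μ : Measure X)
    (hfin : ∀ s : Set X, Bornology.IsBounded s → μ s < ∞)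
    (p q : ℝ) (hp : 1 < p) (hq : q = p / (p - 1))
    (C : ℝ≥0∞)
    (hC : ∀ h : X → ℝ, MemLp h (ENNReal.ofReal q) μ →
      lpNorm μ q (uncenteredMaximal μ h) ≤ C * lpNorm μ q (fun x => (‖h x‖₊ : ℝ≥0∞)))
    (N : ℕ) (x : Fin N → X) (r w t : Fin N → ℝ)
    (hpos : ∀ n, 0 < μ (closedBall (x n) (r n)))
    (ht : ∀ n, 1 ≤ t n) :
    lpNorm μ p (fun y => ∑ n : Fin N, (closedBall (x n) (t n * r n)).indicator
        (fun _ => ENNReal.ofReal (w n) / μ (closedBall (x n) (t n * r n))) y)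
      ≤ C * lpNorm μ p (fun y => ∑ n : Fin N, (closedBall (x n) (r n)).indicator
        (fun _ => ENNReal.ofReal (w n) / μ (closedBall (x n) (r n))) y) := by
  have hpq : p.HolderConjugate q := (Real.holderConjugate_iff_eq_conjExponent hp).2 hq
  have hball : ∀ y s, μ (closedBall y s) ≠ ∞ := fun y s => (hfin _ isBounded_closedBall).ne
  have hr : ∀ n, r n ≤ t n * r n := fun n => le_mul_of_one_le_left
    (nonempty_closedBall.1 (nonempty_of_measure_ne_zero (hpos n).ne')) (ht n)
  have hc : ∀ n, ENNReal.ofReal (w n) / μ (closedBall (x n) (t n * r n)) ≠ ∞ := fun n =>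
    div_ne_top ofReal_ne_top
      ((hpos n).trans_le (measure_mono (closedBall_subset_closedBall (hr n)))).ne'
  have hF := sum_indicator_ne_top (S := fun n => closedBall (x n) (t n * r n)) hc
  have hFm : Measurable fun y => ∑ n : Fin N, (closedBall (x n) (t n * r n)).indicator
      (fun _ => ENNReal.ofReal (w n) / μ (closedBall (x n) (t n * r n))) y := by
    fun_prop (disch := exact measurableSet_closedBall)
  refine lpNorm_le_mul_of_lintegral_rpow_le_lintegral_mul hpq (uncenteredMaximal μ)
    (fun g => (lowerSemicontinuous_uncenteredMaximal μ g).measurable.aemeasurable) hC hFm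
    (by fun_prop (disch := exact measurableSet_closedBall)) hF
    (lintegral_sum_indicator_rpow_ne_top μ (fun _ => measurableSet_closedBall)
      (fun _ => hball _ _) hc hpq.pos) ?_
  rw [lintegral_rpow_eq_lintegral_mul_enorm_toReal_rpow_sub_one μ hp.le hF]
  exact lintegral_sum_indicator_closedBall_mul_le_uncenteredMaximal μ hr (fun n => hball (x n))
    hpos _ (hFm.pow_const _).ennreal_toReal

/-- **Normalized Boman covering lemma.**  If the uncentered maximal operator is bounded on
`L^q(μ)` with constant `C`, then for any finite sequence of closed balls of positive measure,
positive weights `w n` and dilations `t n ≥ 1`,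
`‖ Σ w n 1_{B(x n, t n * r n)}/μ(B(x n, t n * r n)) ‖_p ≤ C ‖ Σ w n 1_{B(x n, r n)}/μ(B(x n, r n)) ‖_p`. -/
theorem normalized_boman_covering
    {X : Type*} [MetricSpace X] [MeasurableSpace X] [BorelSpace X]
    (μ : Measure X) (hμ : μ ≠ 0)
    (hfin : ∀ s : Set X, Bornology.IsBounded s → μ s < ∞)
    (p q : ℝ) (hp : 1 < p) (hq : q = p / (p - 1))
    (C : ℝ≥0∞)
    (hC : ∀ h : X → ℝ, MemLp h (ENNReal.ofReal q) μ →
      lpNorm μ q (uncenteredMaximal μ h) ≤ C * lpNorm μ q (fun x => (‖h x‖₊ : ℝ≥0∞)))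
    (N : ℕ) (x : Fin N → X) (r w t : Fin N → ℝ)
    (hr : ∀ n, 0 < r n)
    (hpos : ∀ n, 0 < μ (closedBall (x n) (r n)))
    (hw : ∀ n, 0 < w n) (ht : ∀ n, 1 ≤ t n) :
    lpNorm μ p (fun y => ∑ n : Fin N, (closedBall (x n) (t n * r n)).indicator
        (fun _ => ENNReal.ofReal (w n) / μ (closedBall (x n) (t n * r n))) y)
      ≤ C * lpNorm μ p (fun y => ∑ n : Fin N, (closedBall (x n) (r n)).indicator
        (fun _ => ENNReal.ofReal (w n) / μ (closedBall (x n) (r n))) y) :=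
  normalized_boman_covering_general μ hfin p q hp hq C hC N x r w t hpos ht

end
end

section
/- Let (X,d,μ) be a metric measure space, let 1 < p < ∞ and let q = p/(p-1) be the conjugate exponent. Let R > 0 and suppose C ≥ 0 is a constant such that ‖M^u_{{R<r},μ} h‖_{L^q(μ)} ≤ C‖h‖_{L^q(μ)} for every h ∈ L^q(μ). Then for every finite sequence of closed balls B^cl(x_n, r_n), 1 ≤ n ≤ N, with r_n > R, every finite sequence of measurable sets E_n with μ(E_n) > 0 and E_n ⊆ B^cl(x_n, r_n), and every finite sequence of weights w_n > 0, one has ‖ Σ_{n=1}^N w_n · 1_{B^cl(x_n, r_n)} / μ(B^cl(x_n, r_n)) ‖_{L^p(μ)} ≤ C · ‖ Σ_{n=1}^N w_n · 1_{E_n} / μ(E_n) ‖_{L^p(μ)}. -/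
/-
Duality with `L^q`: for `g = F^(p-1)` one has `∫ F g = ‖F‖_p^p` and `‖g‖_q = ‖F‖_p^(p-1)`.
For the ball sum `F = Σ w_n 1_{B_n}/μ(B_n)`, `∫ F g = Σ w_n ⨍_{B_n} g`, and the average over `B_n`
is at most `M g` at every point of `E_n ⊆ B_n`, hence at most `⨍_{E_n} M g`. With
`G = Σ w_n 1_{E_n}/μ(E_n)` this gives `∫ F g ≤ ∫ G · M g ≤ ‖G‖_p ‖M g‖_q ≤ C ‖G‖_p ‖g‖_q`.
-/

open MeasureTheory Metric ENNReal Set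

noncomputable section

/-- The uncentered Hardy–Littlewood maximal operator localized at radii larger than `R`:
`M^u_{{R<r},μ} g(x) = sup { (1/μ(B^cl(y,r))) ∫_{B^cl(y,r)} |g| dμ : r > R, d(x,y) < r,
μ(B^cl(y,r)) > 0 }`. -/
def localizedUncenteredMaximal {X : Type*} [MetricSpace X] [MeasurableSpace X]
    (μ : Measure X) (R : ℝ) (g : X → ℝ) (x : X) : ℝ≥0∞ :=
  ⨆ (y : X) (r : ℝ) (_ : R < r) (_ : dist x y < r) (_ : 0 < μ (closedBall y r)),
    (∫⁻ z in closedBall y r, ‖g z‖₊ ∂μ) / μ (closedBall y r)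

open Filter Topology

theorem tendsto_measure_closedBall_nhdsGT {X : Type*} [PseudoMetricSpace X] [MeasurableSpace X]
    [OpensMeasurableSpace X] {μ : Measure X} {y : X} {r ρ : ℝ} (hrρ : r < ρ)
    (hρ : μ (closedBall y ρ) ≠ ∞) :
    Tendsto (fun s => μ (closedBall y s)) (𝓝[>] r) (𝓝 (μ (closedBall y r))) := by
  simpa only [biInter_gt_closedBall, Function.comp_def] using
    tendsto_measure_biInter_gt (fun s _ => measurableSet_closedBall.nullMeasurableSet)
      (fun i j _ hij => closedBall_subset_closedBall hij) ⟨ρ, hrρ, hρ⟩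

theorem MeasureTheory.MemLp.setLIntegral_nnnorm_ne_top {X : Type*} [MeasurableSpace X]
    {μ : Measure X} {g : X → ℝ} {p : ℝ≥0∞} (hg : MemLp g p μ) (hp : 1 ≤ p) {s : Set X}
    (hs : μ s ≠ ∞) :
    ∫⁻ z in s, ‖g z‖₊ ∂μ ≠ ∞ :=
  have : IsFiniteMeasure (μ.restrict s) := isFiniteMeasure_restrict.2 hs
  ((hg.restrict s).integrable hp).2.ne

section SumIndicator

variable {X ι : Type*} [Fintype ι] {s : ι → Set X} {c : ι → ℝ≥0∞}

theorem sum_indicator_ne_top_s1 (hc : ∀ n, c n ≠ ∞) (y : X) :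
    ∑ n, (s n).indicator (fun _ => c n) y ≠ ∞ :=
  ENNReal.sum_ne_top.2 fun n _ => by by_cases hy : y ∈ s n <;> simp [hy, hc n]

variable [MeasurableSpace X] {μ : Measure X}

theorem lintegral_rpow_sum_indicator_ne_top (hs : ∀ n, MeasurableSet (s n))
    (hsfin : ∀ n, μ (s n) ≠ ∞) (hc : ∀ n, c n ≠ ∞) {t : ℝ} (ht : 0 < t) :
    ∫⁻ y, (∑ n, (s n).indicator (fun _ => c n) y) ^ t ∂μ ≠ ∞ := by
  have hle : ∀ y, (∑ n, (s n).indicator (fun _ => c n) y) ^ t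
      ≤ (⋃ n, s n).indicator (fun _ => (∑ n, c n) ^ t) y := fun y => by
    by_cases hy : y ∈ ⋃ n, s n
    · rw [indicator_of_mem hy]
      gcongr with n
      exact indicator_le_self _ _ y
    · rw [indicator_of_notMem hy, Finset.sum_eq_zero fun n _ =>
        indicator_of_notMem (fun h => hy (mem_iUnion_of_mem n h)) _, ENNReal.zero_rpow_of_pos ht]
  refine ((lintegral_mono hle).trans_lt ?_).ne
  rw [lintegral_indicator_const (MeasurableSet.iUnion hs)]
  exact ENNReal.mul_lt_top
    (ENNReal.rpow_lt_top_of_nonneg ht.le (ENNReal.sum_ne_top.2 fun n _ => hc n))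
    ((measure_iUnion_fintype_le μ s).trans_lt (ENNReal.sum_lt_top.2 fun n _ => (hsfin n).lt_top))

theorem lintegral_sum_indicator_mul (hs : ∀ n, MeasurableSet (s n)) {h : X → ℝ≥0∞}
    (hh : Measurable h) :
    ∫⁻ y, (∑ n, (s n).indicator (fun _ => c n) y) * h y ∂μ = ∑ n, c n * ∫⁻ y in s n, h y ∂μ := by
  have hsum : ∀ y, (∑ n, (s n).indicator (fun _ => c n) y) * h y
      = ∑ n, (s n).indicator (fun y => c n * h y) y := fun y => by
    simp only [Finset.sum_mul, indicator_mul_left]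
  simp_rw [hsum]
  rw [lintegral_finsetSum _ fun n _ => (hh.const_mul (c n)).indicator (hs n)]
  refine Finset.sum_congr rfl fun n _ => ?_
  rw [lintegral_indicator (hs n), lintegral_const_mul _ hh]

end SumIndicator

theorem ENNReal.rpow_one_div_le_of_le_mul_rpow {p q : ℝ} (hpq : p.HolderConjugate q)
    {I A : ℝ≥0∞} (hI : I ≠ ∞) (h : I ≤ A * I ^ (1 / q)) : I ^ (1 / p) ≤ A := by
  rcases eq_or_ne I 0 with rfl | hI0
  · simp [ENNReal.zero_rpow_of_pos, hpq.pos]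
  have hsplit : I ^ (1 / p) * I ^ (1 / q) = I := by
    rw [← ENNReal.rpow_add _ _ hI0 hI, one_div, one_div, hpq.inv_add_inv_eq_one, rpow_one]
  rw [← ENNReal.mul_le_mul_iff_left (ENNReal.rpow_pos (pos_iff_ne_zero.2 hI0) hI).ne'
    (ENNReal.rpow_ne_top_of_nonneg (one_div_nonneg.2 hpq.symm.nonneg) hI), hsplit]
  exact h

theorem lpNorm_le_of_forall_lintegral_mul_le {X : Type*} [MeasurableSpace X] {μ : Measure X}
    {p q : ℝ} (hpq : p.HolderConjugate q) {F : X → ℝ≥0∞} (hFm : Measurable F)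
    (hF : ∀ y, F y ≠ ∞) (hFp : ∫⁻ y, F y ^ p ∂μ ≠ ∞) {A : ℝ≥0∞}
    (hA : ∀ g : X → ℝ, Measurable g → MemLp g (ENNReal.ofReal q) μ →
      ∫⁻ y, F y * ‖g y‖₊ ∂μ ≤ A * lpNorm μ q fun y => ‖g y‖₊) :
    lpNorm μ p F ≤ A := by
  set g : X → ℝ := fun y => (F y ^ (p - 1)).toReal
  have hp1 : 0 ≤ p - 1 := hpq.sub_one_pos.le
  have hg : ∀ y, (‖g y‖₊ : ℝ≥0∞) = F y ^ (p - 1) := fun y => by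
    rw [← enorm_eq_nnnorm, Real.enorm_eq_ofReal ENNReal.toReal_nonneg,
      ENNReal.ofReal_toReal (ENNReal.rpow_ne_top_of_nonneg hp1 (hF y))]
  have hgq : ∫⁻ y, (‖g y‖₊ : ℝ≥0∞) ^ q ∂μ = ∫⁻ y, F y ^ p ∂μ := by
    simp_rw [hg, ← ENNReal.rpow_mul, hpq.sub_one_mul_conj]
  have hFg : ∫⁻ y, F y * ‖g y‖₊ ∂μ = ∫⁻ y, F y ^ p ∂μ := by
    refine lintegral_congr fun y => ?_
    conv_rhs => rw [← add_sub_cancel (1 : ℝ) p]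
    rw [hg, ENNReal.rpow_add_of_nonneg _ _ zero_le_one hp1, ENNReal.rpow_one]
  have hgm : Measurable g := (hFm.pow_const _).ennreal_toReal
  have hgLq : MemLp g (ENNReal.ofReal q) μ := by
    refine ⟨hgm.aestronglyMeasurable, (eLpNorm_lt_top_iff_lintegral_rpow_enorm_lt_top
      (by simp [hpq.symm.pos]) ENNReal.ofReal_ne_top).2 ?_⟩
    rw [ENNReal.toReal_ofReal hpq.symm.nonneg]
    exact hgq.trans_lt hFp.lt_top
  have hAg : ∫⁻ y, F y * ‖g y‖₊ ∂μ ≤ A * (∫⁻ y, (‖g y‖₊ : ℝ≥0∞) ^ q ∂μ) ^ (1 / q) :=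
    hA g hgm hgLq
  rw [hFg, hgq] at hAg
  exact ENNReal.rpow_one_div_le_of_le_mul_rpow hpq hFp hAg

namespace localizedUncenteredMaximal

variable {X : Type*} [MetricSpace X] [MeasurableSpace X] {μ : Measure X} {R : ℝ} {g : X → ℝ}

theorem setLIntegral_div_le {x y : X} {r : ℝ} (hR : R < r) (hxy : dist x y < r)
    (hpos : 0 < μ (closedBall y r)) :
    (∫⁻ z in closedBall y r, ‖g z‖₊ ∂μ) / μ (closedBall y r)
      ≤ localizedUncenteredMaximal μ R g x :=
  le_iSup_of_le y <| le_iSup_of_le r <| le_iSup_of_le hR <| le_iSup_of_le hxy <|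
    le_iSup_of_le hpos le_rfl

theorem lowerSemicontinuous : LowerSemicontinuous (localizedUncenteredMaximal μ R g) := by
  intro x t ht
  simp only [localizedUncenteredMaximal, lt_iSup_iff] at ht
  obtain ⟨y, r, hR, hxy, hpos, hlt⟩ := ht
  filter_upwards [isOpen_ball.mem_nhds (mem_ball.mpr hxy)] with x' hx'
  exact hlt.trans_le (setLIntegral_div_le hR (mem_ball.mp hx') hpos)

variable [BorelSpace X]

theorem measurable : Measurable (localizedUncenteredMaximal μ R g) :=
  lowerSemicontinuous.measurable

/-- The closed ball `B(y, r)` is the decreasing limit of the balls `B(y, r')`, `r' ↓ r`, which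
contain `x` in their open interior; their averages converge by continuity from above of `μ` and
of `‖g‖ μ`. -/
theorem setLIntegral_div_le_of_dist_le {x y : X} {r ρ : ℝ} (hR : R < r) (hxy : dist x y ≤ r)
    (hpos : 0 < μ (closedBall y r)) (hrρ : r < ρ) (hμρ : μ (closedBall y ρ) ≠ ∞)
    (hgρ : ∫⁻ z in closedBall y ρ, ‖g z‖₊ ∂μ ≠ ∞) :
    (∫⁻ z in closedBall y r, ‖g z‖₊ ∂μ) / μ (closedBall y r)
      ≤ localizedUncenteredMaximal μ R g x := by
  set ν := μ.withDensity fun z => (‖g z‖₊ : ℝ≥0∞)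
  have hν : ∀ s, ν (closedBall y s) = ∫⁻ z in closedBall y s, ‖g z‖₊ ∂μ :=
    fun s => withDensity_apply _ measurableSet_closedBall
  have hμlim := tendsto_measure_closedBall_nhdsGT hrρ hμρ
  have hνlim := tendsto_measure_closedBall_nhdsGT (μ := ν) hrρ ((hν ρ).trans_ne hgρ)
  have hlim := ENNReal.Tendsto.div hνlim (Or.inr hpos.ne') hμlim
    (Or.inl (measure_mono (closedBall_subset_closedBall hrρ.le) |>.trans_lt hμρ.lt_top).ne)
  rw [← hν]
  refine le_of_tendsto hlim ?_
  filter_upwards [self_mem_nhdsWithin] with s (hs : r < s)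
  rw [hν]
  exact setLIntegral_div_le (hR.trans hs) (hxy.trans_lt hs)
    (hpos.trans_le (measure_mono (closedBall_subset_closedBall hs.le)))

theorem setLIntegral_div_le_setLIntegral_div
    (hfin : ∀ s : Set X, Bornology.IsBounded s → μ s < ∞) {y : X}
    (hg : ∀ ρ, ∫⁻ z in closedBall y ρ, ‖g z‖₊ ∂μ ≠ ∞) {r : ℝ} (hR : R < r) {E : Set X}
    (hEpos : 0 < μ E) (hEsub : E ⊆ closedBall y r) :
    (∫⁻ z in closedBall y r, ‖g z‖₊ ∂μ) / μ (closedBall y r)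
      ≤ (∫⁻ z in E, localizedUncenteredMaximal μ R g z ∂μ) / μ E := by
  have hEfin : μ E ≠ ∞ := (measure_mono hEsub |>.trans_lt (hfin _ isBounded_closedBall)).ne
  rw [ENNReal.le_div_iff_mul_le (Or.inl hEpos.ne') (Or.inl hEfin), ← setLIntegral_const]
  refine setLIntegral_mono measurable fun z hz => ?_
  exact setLIntegral_div_le_of_dist_le hR (hEsub hz) (hEpos.trans_le (measure_mono hEsub))
    (lt_add_one r) (hfin _ isBounded_closedBall).ne (hg _)

theorem lintegral_sum_indicator_mul_le {ι : Type*} [Fintype ι]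
    (hfin : ∀ s : Set X, Bornology.IsBounded s → μ s < ∞) (hgm : Measurable g)
    (hg : ∀ y ρ, ∫⁻ z in closedBall y ρ, ‖g z‖₊ ∂μ ≠ ∞) {x : ι → X} {r : ι → ℝ}
    (hr : ∀ n, R < r n) {E : ι → Set X} (hE : ∀ n, MeasurableSet (E n))
    (hEpos : ∀ n, 0 < μ (E n)) (hEsub : ∀ n, E n ⊆ closedBall (x n) (r n)) (c : ι → ℝ≥0∞) :
    ∫⁻ y, (∑ n, (closedBall (x n) (r n)).indicator (fun _ => c n / μ (closedBall (x n) (r n))) y)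
        * ‖g y‖₊ ∂μ
      ≤ ∫⁻ y, (∑ n, (E n).indicator (fun _ => c n / μ (E n)) y)
        * localizedUncenteredMaximal μ R g y ∂μ := by
  rw [lintegral_sum_indicator_mul (fun n => measurableSet_closedBall)
      hgm.nnnorm.coe_nnreal_ennreal, lintegral_sum_indicator_mul hE measurable]
  refine Finset.sum_le_sum fun n _ => ?_
  rw [ENNReal.mul_comm_div, ENNReal.mul_comm_div]
  exact mul_le_mul_right
    (setLIntegral_div_le_setLIntegral_div hfin (hg _) (hr n) (hEpos n) (hEsub n)) _

end localizedUncenteredMaximal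

theorem generalized_boman_covering_general
    {X : Type*} [MetricSpace X] [MeasurableSpace X] [BorelSpace X]
    (μ : Measure X)
    (hfin : ∀ s : Set X, Bornology.IsBounded s → μ s < ∞)
    (p q : ℝ) (hp : 1 < p) (hq : q = p / (p - 1))
    (R : ℝ)
    (C : ℝ≥0∞)
    (hC : ∀ h : X → ℝ, MemLp h (ENNReal.ofReal q) μ →
      lpNorm μ q (localizedUncenteredMaximal μ R h) ≤ C * lpNorm μ q (fun x => (‖h x‖₊ : ℝ≥0∞)))
    (N : ℕ) (x : Fin N → X) (r w : Fin N → ℝ) (E : Fin N → Set X)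
    (hr : ∀ n, R < r n)
    (hE : ∀ n, MeasurableSet (E n))
    (hEpos : ∀ n, 0 < μ (E n))
    (hEsub : ∀ n, E n ⊆ closedBall (x n) (r n)) :
    lpNorm μ p (fun y => ∑ n : Fin N, (closedBall (x n) (r n)).indicator
        (fun _ => ENNReal.ofReal (w n) / μ (closedBall (x n) (r n))) y)
      ≤ C * lpNorm μ p (fun y => ∑ n : Fin N, (E n).indicator
        (fun _ => ENNReal.ofReal (w n) / μ (E n)) y) := by
  have hpq : p.HolderConjugate q := (Real.holderConjugate_iff_eq_conjExponent hp).mpr hq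
  have hBfin : ∀ n, μ (closedBall (x n) (r n)) ≠ ∞ := fun n => (hfin _ isBounded_closedBall).ne
  have hc : ∀ n, ENNReal.ofReal (w n) / μ (closedBall (x n) (r n)) ≠ ∞ := fun n =>
    ENNReal.div_ne_top ofReal_ne_top ((hEpos n).trans_le (measure_mono (hEsub n))).ne'
  refine lpNorm_le_of_forall_lintegral_mul_le hpq
    (Finset.measurable_sum _ fun n _ => measurable_const.indicator measurableSet_closedBall)
    (sum_indicator_ne_top_s1 hc)
    (lintegral_rpow_sum_indicator_ne_top (fun n => measurableSet_closedBall) hBfin hc hpq.pos)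
    fun g hgm hg => ?_
  have hg_ball : ∀ y ρ, ∫⁻ z in closedBall y ρ, ‖g z‖₊ ∂μ ≠ ∞ := fun y ρ =>
    hg.setLIntegral_nnnorm_ne_top (ENNReal.one_le_ofReal.2 hpq.symm.lt.le)
      (hfin _ isBounded_closedBall).ne
  set G : X → ℝ≥0∞ := fun y => ∑ n, (E n).indicator (fun _ => ENNReal.ofReal (w n) / μ (E n)) y
  set Mg := localizedUncenteredMaximal μ R g
  calc _ ≤ ∫⁻ y, G y * Mg y ∂μ :=
        localizedUncenteredMaximal.lintegral_sum_indicator_mul_le hfin hgm hg_ball hr hE hEpos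
          hEsub _
    _ ≤ lpNorm μ p G * lpNorm μ q Mg := ENNReal.lintegral_mul_le_Lp_mul_Lq μ hpq
        (Finset.measurable_sum _ fun n _ => measurable_const.indicator (hE n)).aemeasurable
        localizedUncenteredMaximal.measurable.aemeasurable
    _ ≤ lpNorm μ p G * (C * lpNorm μ q fun y => ‖g y‖₊) := mul_le_mul_right (hC g hg) _
    _ = C * lpNorm μ p G * lpNorm μ q fun y => ‖g y‖₊ := by ring

/-- **Generalized Boman covering lemma.**  If the uncentered maximal operator localized at radii
larger than `R` is bounded on `L^q(μ)` with constant `C`, then for any finite sequence of closed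
balls with radii `r n > R`, sets `E n ⊆ B^cl(x n, r n)` of positive measure, and positive weights,
`‖ Σ w n 1_{B(x n, r n)}/μ(B(x n, r n)) ‖_p ≤ C ‖ Σ w n 1_{E n}/μ(E n) ‖_p`. -/
theorem generalized_boman_covering
    {X : Type*} [MetricSpace X] [MeasurableSpace X] [BorelSpace X]
    (μ : Measure X) (hμ : μ ≠ 0)
    (hfin : ∀ s : Set X, Bornology.IsBounded s → μ s < ∞)
    (p q : ℝ) (hp : 1 < p) (hq : q = p / (p - 1))
    (R : ℝ) (hR : 0 < R)
    (C : ℝ≥0∞)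
    (hC : ∀ h : X → ℝ, MemLp h (ENNReal.ofReal q) μ →
      lpNorm μ q (localizedUncenteredMaximal μ R h) ≤ C * lpNorm μ q (fun x => (‖h x‖₊ : ℝ≥0∞)))
    (N : ℕ) (x : Fin N → X) (r w : Fin N → ℝ) (E : Fin N → Set X)
    (hr : ∀ n, R < r n)
    (hE : ∀ n, MeasurableSet (E n))
    (hEpos : ∀ n, 0 < μ (E n))
    (hEsub : ∀ n, E n ⊆ closedBall (x n) (r n))
    (hw : ∀ n, 0 < w n) :
    lpNorm μ p (fun y => ∑ n : Fin N, (closedBall (x n) (r n)).indicator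
        (fun _ => ENNReal.ofReal (w n) / μ (closedBall (x n) (r n))) y)
      ≤ C * lpNorm μ p (fun y => ∑ n : Fin N, (E n).indicator
        (fun _ => ENNReal.ofReal (w n) / μ (E n)) y) :=
  generalized_boman_covering_general μ hfin p q hp hq R C hC N x r w E hr hE hEpos hEsub

end
end

section
/- Let (X,d,μ) be a metric measure space, let 1 < p < ∞ and q = p/(p-1), and suppose C ≥ 0 is a constant such that ‖M_μ h‖_{L^q(μ)} ≤ C‖h‖_{L^q(μ)} for every h ∈ L^q(μ). Let B^cl(x_n, r_n), 1 ≤ n ≤ N, be a finite sequence of closed balls with centers x_n in the support of μ. Then there exists a sequence T_n ∈ (0,1), 1 ≤ n ≤ N (depending on the balls), such that whenever 0 < t_n ≤ T_n for each n, for every sequence of weights w_n > 0 one has ‖ Σ_{n=1}^N w_n · 1_{B^cl(x_n, r_n)} / μ(B^cl(x_n, r_n)) ‖_{L^p(μ)} ≤ 2C · ‖ Σ_{n=1}^N w_n · 1_{B^cl(x_n, t_n r_n)} / μ(B^cl(x_n, t_n r_n)) ‖_{L^p(μ)}. -/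
/-!
Test `F = ∑ₙ wₙ 1_{Bₙ} / μ(Bₙ)` against its dual function `g = F^{p-1}`, so that
`‖F‖ₚᵖ = ∫ F g = ∑ₙ wₙ ⨍_{Bₙ} g` and `‖g‖_q = ‖F‖ₚ^{p/q}`. By continuity of `μ` from above,
`Tₙ` can be chosen with `μ(B(xₙ, (1 + 2Tₙ) rₙ)) ≤ 2 μ(Bₙ)`. For `y` in the small ball
`B(xₙ, tₙ rₙ)` the ball `B(y, (1 + tₙ) rₙ)` contains `Bₙ` and lies in `B(xₙ, (1 + 2Tₙ) rₙ)`,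
so `M g (y) ≥ ⨍_{Bₙ} g / 2`. Hence `‖F‖ₚᵖ ≤ 2 ∫ G · M g ≤ 2 ‖G‖ₚ C ‖g‖_q`, and dividing by
`‖F‖ₚ^{p/q}` gives the claim.
-/

open MeasureTheory Metric ENNReal Set

noncomputable section

/-- The centered Hardy–Littlewood maximal operator. -/
def centeredMaximal {X : Type*} [MetricSpace X] [MeasurableSpace X]
    (μ : Measure X) (g : X → ℝ) (x : X) : ℝ≥0∞ :=
  ⨆ (r : ℝ) (_ : 0 < r) (_ : 0 < μ (closedBall x r)),
    (∫⁻ z in closedBall x r, ‖g z‖₊ ∂μ) / μ (closedBall x r)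

open Filter Topology

section Balls

variable {X : Type*} [PseudoMetricSpace X] [MeasurableSpace X] [OpensMeasurableSpace X]
  {μ : Measure X}

theorem tendsto_measure_closedBall_nhdsGT_s6 (x : X) {r : ℝ}
    (hfin : ∃ R > r, μ (closedBall x R) ≠ ∞) :
    Tendsto (fun s => μ (closedBall x s)) (𝓝[>] r) (𝓝 (μ (closedBall x r))) := by
  have := tendsto_measure_biInter_gt (μ := μ) (s := closedBall x)
    (fun _ _ => measurableSet_closedBall.nullMeasurableSet)
    (fun _ _ _ hij => closedBall_subset_closedBall hij) hfin
  rwa [biInter_gt_closedBall] at this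

theorem exists_mem_Ioo_measure_closedBall_le_two_mul {x : X} {r : ℝ} (hr : 0 < r)
    (h0 : μ (closedBall x r) ≠ 0) (hfin : ∃ R > r, μ (closedBall x R) ≠ ∞) :
    ∃ T ∈ Ioo (0 : ℝ) 1, μ (closedBall x (r + 2 * T * r)) ≤ 2 * μ (closedBall x r) := by
  obtain ⟨R, hR, hRfin⟩ := hfin
  have hlt : μ (closedBall x r) < 2 * μ (closedBall x r) :=
    two_mul (μ (closedBall x r)) ▸ ENNReal.lt_add_right (ne_top_of_le_ne_top hRfin
      (measure_mono (closedBall_subset_closedBall hR.le))) h0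
  have hgrow : Tendsto (fun T : ℝ => r + 2 * T * r) (𝓝[>] 0) (𝓝[>] r) := by
    refine tendsto_nhdsWithin_of_tendsto_nhds_of_eventually_within _ ?_ ?_
    · have hcont : Continuous fun T : ℝ => r + 2 * T * r := by fun_prop
      simpa using (hcont.tendsto 0).mono_left nhdsWithin_le_nhds
    · filter_upwards [self_mem_nhdsWithin] with T (hT : 0 < T)
      simp only [mem_Ioi]
      nlinarith
  have hsmall : ∀ᶠ T in 𝓝[>] (0 : ℝ), T ∈ Ioo (0 : ℝ) 1 := Ioo_mem_nhdsGT zero_lt_one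
  exact (hsmall.and (((tendsto_measure_closedBall_nhdsGT_s6 x ⟨R, hR, hRfin⟩).comp
    hgrow).eventually_le_const hlt)).exists

end Balls

section Maximal

variable {X : Type*} [MetricSpace X] [MeasurableSpace X] {μ : Measure X}

/-- A null ball is not seen by the supremum, but the left side is then `0 / 0 = 0`. -/
theorem lintegral_closedBall_div_le_centeredMaximal (g : X → ℝ) {y : X} {ρ : ℝ} (hρ : 0 < ρ) :
    (∫⁻ z in closedBall y ρ, ‖g z‖ₑ ∂μ) / μ (closedBall y ρ) ≤ centeredMaximal μ g y := by
  rcases eq_or_ne (μ (closedBall y ρ)) 0 with h0 | hpos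
  · simp [setLIntegral_measure_zero _ _ h0]
  · exact le_iSup_of_le ρ (le_iSup_of_le hρ (le_iSup_of_le (pos_iff_ne_zero.2 hpos) le_rfl))

theorem lintegral_closedBall_div_two_mul_le_centeredMaximal_of_mem (g : X → ℝ) {x y : X}
    {r t : ℝ} (hr : 0 < r) (ht : 0 < t) (hy : y ∈ closedBall x (t * r))
    (hdoubling : μ (closedBall x (r + 2 * t * r)) ≤ 2 * μ (closedBall x r)) :
    (∫⁻ z in closedBall x r, ‖g z‖ₑ ∂μ) / (2 * μ (closedBall x r)) ≤ centeredMaximal μ g y := by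
  have hyx : dist y x ≤ t * r := hy
  have hsub : closedBall x r ⊆ closedBall y (r + t * r) :=
    closedBall_subset_closedBall' (by rw [dist_comm]; linarith)
  have hsup : closedBall y (r + t * r) ⊆ closedBall x (r + 2 * t * r) :=
    closedBall_subset_closedBall' (by linarith)
  exact (ENNReal.div_le_div (lintegral_mono_set hsub) ((measure_mono hsup).trans hdoubling)).trans
    (lintegral_closedBall_div_le_centeredMaximal g (by positivity))

end Maximal

theorem lintegral_sum_indicator_const_mul {X ι : Type*} [MeasurableSpace X] [Fintype ι]
    {μ : Measure X} {S : ι → Set X} (hS : ∀ n, MeasurableSet (S n)) (k : ι → ℝ≥0∞)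
    {h : X → ℝ≥0∞} (hh : Measurable h) :
    ∫⁻ y, (∑ n, (S n).indicator (fun _ => k n) y) * h y ∂μ = ∑ n, k n * ∫⁻ y in S n, h y ∂μ := by
  have hpt : ∀ y, (∑ n, (S n).indicator (fun _ => k n) y) * h y =
      ∑ n, (S n).indicator (fun z => k n * h z) y := fun y => by
    simp only [Finset.sum_mul, indicator_mul_left]
  simp_rw [hpt]
  rw [lintegral_finsetSum _ fun n _ => (hh.const_mul _).indicator (hS n)]
  simp_rw [lintegral_indicator (hS _), lintegral_const_mul _ hh]

theorem ENNReal.rpow_eq_rpow_sub_one_mul (x : ℝ≥0∞) {p : ℝ} (hp : 1 ≤ p) :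
    x ^ p = x ^ (p - 1) * x := by
  conv_lhs => rw [← sub_add_cancel p 1]
  rw [ENNReal.rpow_add_of_nonneg _ _ (by linarith) zero_le_one, ENNReal.rpow_one]

theorem lintegral_rpow_lt_top_of_le {X : Type*} [MeasurableSpace X] {μ : Measure X}
    {F : X → ℝ≥0∞} {c : ℝ≥0∞} {p : ℝ} (hp : 1 ≤ p) (hFc : ∀ y, F y ≤ c) (hc : c ≠ ∞)
    (hF : ∫⁻ y, F y ∂μ ≠ ∞) : ∫⁻ y, F y ^ p ∂μ < ∞ := by
  have hpow : ∀ y, F y ^ p ≤ c ^ (p - 1) * F y := fun y => by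
    rw [ENNReal.rpow_eq_rpow_sub_one_mul _ hp]
    gcongr
    exact hFc y
  calc ∫⁻ y, F y ^ p ∂μ ≤ ∫⁻ y, c ^ (p - 1) * F y ∂μ := lintegral_mono hpow
    _ = c ^ (p - 1) * ∫⁻ y, F y ∂μ := lintegral_const_mul' _ _ (by finiteness)
    _ < ∞ := by finiteness

section NormalizedBallSum

variable {X ι : Type*} [PseudoMetricSpace X] [MeasurableSpace X] [Fintype ι] {μ : Measure X}
  {x : ι → X} {r : ι → ℝ}

def normalizedBallSum (μ : Measure X) (x : ι → X) (r w : ι → ℝ) (y : X) : ℝ≥0∞ :=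
  ∑ n, (closedBall (x n) (r n)).indicator
    (fun _ => ENNReal.ofReal (w n) / μ (closedBall (x n) (r n))) y

theorem measurable_normalizedBallSum [OpensMeasurableSpace X] (w : ι → ℝ) :
    Measurable (normalizedBallSum μ x r w) :=
  Finset.measurable_sum _ fun _ _ => measurable_const.indicator measurableSet_closedBall

theorem normalizedBallSum_le (w : ι → ℝ) (y : X) :
    normalizedBallSum μ x r w y ≤ ∑ n, ENNReal.ofReal (w n) / μ (closedBall (x n) (r n)) :=
  Finset.sum_le_sum fun _ _ => indicator_le_self _ _ y

theorem sum_div_measure_closedBall_ne_top (h0 : ∀ n, μ (closedBall (x n) (r n)) ≠ 0)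
    (w : ι → ℝ) : ∑ n, ENNReal.ofReal (w n) / μ (closedBall (x n) (r n)) ≠ ∞ :=
  ENNReal.sum_ne_top.2 fun n _ => ENNReal.div_ne_top ENNReal.ofReal_ne_top (h0 n)

theorem normalizedBallSum_ne_top (h0 : ∀ n, μ (closedBall (x n) (r n)) ≠ 0) (w : ι → ℝ)
    (y : X) : normalizedBallSum μ x r w y ≠ ∞ :=
  ne_top_of_le_ne_top (sum_div_measure_closedBall_ne_top h0 w) (normalizedBallSum_le w y)

theorem lintegral_normalizedBallSum_mul [OpensMeasurableSpace X] (w : ι → ℝ) {h : X → ℝ≥0∞}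
    (hh : Measurable h) :
    ∫⁻ y, normalizedBallSum μ x r w y * h y ∂μ =
      ∑ n, ENNReal.ofReal (w n) / μ (closedBall (x n) (r n)) *
        ∫⁻ y in closedBall (x n) (r n), h y ∂μ :=
  lintegral_sum_indicator_const_mul (fun _ => measurableSet_closedBall) _ hh

theorem lintegral_normalizedBallSum_rpow_lt_top [OpensMeasurableSpace X] {p : ℝ} (hp : 1 ≤ p)
    (h0 : ∀ n, μ (closedBall (x n) (r n)) ≠ 0) (hfin : ∀ n, μ (closedBall (x n) (r n)) ≠ ∞)
    (w : ι → ℝ) : ∫⁻ y, normalizedBallSum μ x r w y ^ p ∂μ < ∞ := by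
  refine lintegral_rpow_lt_top_of_le hp (normalizedBallSum_le w)
    (sum_div_measure_closedBall_ne_top h0 w) ?_
  have hint : ∫⁻ y, normalizedBallSum μ x r w y ∂μ =
      ∑ n, ENNReal.ofReal (w n) / μ (closedBall (x n) (r n)) * μ (closedBall (x n) (r n)) := by
    simpa using lintegral_normalizedBallSum_mul (μ := μ) (x := x) (r := r) w measurable_one
  rw [hint]
  exact ENNReal.sum_ne_top.2 fun n _ => ENNReal.mul_ne_top
    (ENNReal.div_ne_top ENNReal.ofReal_ne_top (h0 n)) (hfin n)

end NormalizedBallSum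

section Duality

variable {X : Type*} [MeasurableSpace X] {μ : Measure X} {p q : ℝ}

theorem lpNorm_mono (hq : 0 ≤ q) {f g : X → ℝ≥0∞} (hfg : ∀ y, f y ≤ g y) :
    lpNorm μ q f ≤ lpNorm μ q g := by
  unfold _root_.lpNorm
  gcongr with y
  exact hfg y

theorem exists_dual_function (hpq : p.HolderConjugate q) {F : X → ℝ≥0∞} (hF : Measurable F)
    (hF_ne_top : ∀ y, F y ≠ ∞) (hFp : ∫⁻ y, F y ^ p ∂μ ≠ ∞) :
    ∃ g : X → ℝ, Measurable g ∧ MemLp g (ENNReal.ofReal q) μ ∧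
      lpNorm μ q (fun y => ‖g y‖ₑ) = (∫⁻ y, F y ^ p ∂μ) ^ (1 / q) ∧
      ∫⁻ y, F y * ‖g y‖ₑ ∂μ = ∫⁻ y, F y ^ p ∂μ := by
  set g : X → ℝ := fun y => (F y ^ (p - 1)).toReal
  have hg_enorm : ∀ y, ‖g y‖ₑ = F y ^ (p - 1) := fun y => by
    rw [Real.enorm_eq_ofReal ENNReal.toReal_nonneg,
      ENNReal.ofReal_toReal (ENNReal.rpow_ne_top_of_nonneg hpq.sub_one_pos.le (hF_ne_top y))]
  have hg_rpow : ∫⁻ y, ‖g y‖ₑ ^ q ∂μ = ∫⁻ y, F y ^ p ∂μ := by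
    simp_rw [hg_enorm, ← ENNReal.rpow_mul, hpq.sub_one_mul_conj]
  have hg : Measurable g := (hF.pow_const _).ennreal_toReal
  refine ⟨g, hg, ⟨hg.aestronglyMeasurable, ?_⟩, by rw [_root_.lpNorm, hg_rpow], ?_⟩
  · rw [eLpNorm_eq_lintegral_rpow_enorm_toReal (by simp [hpq.symm.pos]) ENNReal.ofReal_ne_top,
      ENNReal.toReal_ofReal hpq.symm.nonneg, hg_rpow]
    exact ENNReal.rpow_lt_top_of_nonneg (by simp [hpq.symm.nonneg]) hFp
  · simp_rw [hg_enorm, mul_comm (F _), ← ENNReal.rpow_eq_rpow_sub_one_mul _ hpq.lt.le]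

theorem lpNorm_le_of_lintegral_rpow_le_mul (hpq : p.HolderConjugate q) {F G H : X → ℝ≥0∞}
    (hG : AEMeasurable G μ) (hH : AEMeasurable H μ) {K C : ℝ≥0∞}
    (hFp : ∫⁻ y, F y ^ p ∂μ ≠ ∞) (hFGH : ∫⁻ y, F y ^ p ∂μ ≤ K * ∫⁻ y, G y * H y ∂μ)
    (hHq : lpNorm μ q H ≤ C * (∫⁻ y, F y ^ p ∂μ) ^ (1 / q)) :
    lpNorm μ p F ≤ K * C * lpNorm μ p G := by
  set A := ∫⁻ y, F y ^ p ∂μ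
  rcases eq_or_ne A 0 with hA0 | hA0
  · simp [_root_.lpNorm, A, hA0, hpq.pos]
  have hAq_ne_zero : A ^ (1 / q) ≠ 0 := by simp [ENNReal.rpow_eq_zero_iff, hA0, hFp]
  have hAq_ne_top : A ^ (1 / q) ≠ ∞ := by simp [ENNReal.rpow_eq_top_iff, hA0, hFp]
  have hsplit : A = A ^ (1 / p) * A ^ (1 / q) := by
    rw [← ENNReal.rpow_add _ _ hA0 hFp, one_div, one_div, hpq.inv_add_inv_eq_one,
      ENNReal.rpow_one]
  refine (ENNReal.mul_le_mul_iff_left hAq_ne_zero hAq_ne_top).1 ?_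
  calc lpNorm μ p F * A ^ (1 / q) = A := hsplit.symm
    _ ≤ K * ∫⁻ y, G y * H y ∂μ := hFGH
    _ ≤ K * (lpNorm μ p G * lpNorm μ q H) := by
      gcongr
      exact ENNReal.lintegral_mul_le_Lp_mul_Lq μ hpq hG hH
    _ ≤ K * (lpNorm μ p G * (C * A ^ (1 / q))) := by gcongr
    _ = K * C * lpNorm μ p G * A ^ (1 / q) := by ring

end Duality

/-- `centeredMaximal μ g` need not be measurable; Hölder's inequality is applied instead to the
measurable step function `H ≤ centeredMaximal μ g` constructed here. -/
theorem exists_le_centeredMaximal_lintegral_normalizedBallSum_mul_le {X ι : Type*} [MetricSpace X]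
    [MeasurableSpace X] [OpensMeasurableSpace X] [Fintype ι] {μ : Measure X} {x : ι → X}
    {r t : ι → ℝ} (hr : ∀ n, 0 < r n) (ht : ∀ n, 0 < t n)
    (hdoubling : ∀ n, μ (closedBall (x n) (r n + 2 * t n * r n)) ≤ 2 * μ (closedBall (x n) (r n)))
    (h0 : ∀ n, μ (closedBall (x n) (t n * r n)) ≠ 0)
    (hfin : ∀ n, μ (closedBall (x n) (t n * r n)) ≠ ∞) (w : ι → ℝ) {g : X → ℝ}
    (hg : Measurable g) :
    ∃ H : X → ℝ≥0∞, Measurable H ∧ (∀ y, H y ≤ centeredMaximal μ g y) ∧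
      ∫⁻ y, normalizedBallSum μ x r w y * ‖g y‖ₑ ∂μ ≤
        2 * ∫⁻ y, normalizedBallSum μ x (fun n => t n * r n) w y * H y ∂μ := by
  set c : ι → ℝ≥0∞ := fun n =>
    (∫⁻ z in closedBall (x n) (r n), ‖g z‖ₑ ∂μ) / (2 * μ (closedBall (x n) (r n)))
  set H : X → ℝ≥0∞ := fun y => ⨆ n, (closedBall (x n) (t n * r n)).indicator (fun _ => c n) y
  have hc : ∀ n, ∀ y ∈ closedBall (x n) (t n * r n), c n ≤ centeredMaximal μ g y := fun n y hy =>
    lintegral_closedBall_div_two_mul_le_centeredMaximal_of_mem g (hr n) (ht n) hy (hdoubling n)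
  have hH : Measurable H :=
    Measurable.iSup fun n => measurable_const.indicator measurableSet_closedBall
  refine ⟨H, hH, fun y => iSup_le fun n => ?_, ?_⟩
  · by_cases hy : y ∈ closedBall (x n) (t n * r n)
    · simpa [hy] using hc n y hy
    · simp [hy]
  rw [lintegral_normalizedBallSum_mul w hg.enorm, lintegral_normalizedBallSum_mul w hH,
    Finset.mul_sum]
  refine Finset.sum_le_sum fun n _ => ?_
  have hcH : c n * μ (closedBall (x n) (t n * r n)) ≤
      ∫⁻ y in closedBall (x n) (t n * r n), H y ∂μ := by
    rw [← setLIntegral_const]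
    exact setLIntegral_mono' measurableSet_closedBall fun y hy =>
      le_iSup_of_le n (by simp [hy])
  have h2c : 2 * c n =
      (∫⁻ y in closedBall (x n) (r n), ‖g y‖ₑ ∂μ) / μ (closedBall (x n) (r n)) := by
    rw [← mul_div_assoc, ENNReal.mul_div_mul_left _ _ two_ne_zero ENNReal.ofNat_ne_top]
  calc ENNReal.ofReal (w n) / μ (closedBall (x n) (r n)) *
        ∫⁻ y in closedBall (x n) (r n), ‖g y‖ₑ ∂μ
      = ENNReal.ofReal (w n) * (2 * c n) *
        ((μ (closedBall (x n) (t n * r n)))⁻¹ * μ (closedBall (x n) (t n * r n))) := by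
        rw [h2c, ENNReal.inv_mul_cancel (h0 n) (hfin n), mul_one, div_eq_mul_inv, div_eq_mul_inv]
        ring
    _ = 2 * (ENNReal.ofReal (w n) / μ (closedBall (x n) (t n * r n)) *
        (c n * μ (closedBall (x n) (t n * r n)))) := by
        rw [div_eq_mul_inv]
        ring
    _ ≤ _ := by gcongr

theorem centered_boman_covering_general
    {X : Type*} [MetricSpace X] [MeasurableSpace X] [BorelSpace X]
    (μ : Measure X)
    (hfin : ∀ s : Set X, Bornology.IsBounded s → μ s < ∞)
    (p q : ℝ) (hp : 1 < p) (hq : q = p / (p - 1))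
    (C : ℝ≥0∞)
    (hC : ∀ h : X → ℝ, MemLp h (ENNReal.ofReal q) μ →
      lpNorm μ q (centeredMaximal μ h) ≤ C * lpNorm μ q (fun x => (‖h x‖₊ : ℝ≥0∞)))
    (N : ℕ) (x : Fin N → X) (r : Fin N → ℝ)
    (hr : ∀ n, 0 < r n)
    (hsupp : ∀ n, ∀ ε : ℝ, 0 < ε → 0 < μ (ball (x n) ε)) :
    ∃ T : Fin N → ℝ, (∀ n, T n ∈ Set.Ioo (0 : ℝ) 1) ∧
      ∀ t : Fin N → ℝ, (∀ n, 0 < t n ∧ t n ≤ T n) →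
      ∀ w : Fin N → ℝ, (∀ n, 0 < w n) →
        lpNorm μ p (fun y => ∑ n : Fin N, (closedBall (x n) (r n)).indicator
            (fun _ => ENNReal.ofReal (w n) / μ (closedBall (x n) (r n))) y)
          ≤ 2 * C * lpNorm μ p (fun y => ∑ n : Fin N, (closedBall (x n) (t n * r n)).indicator
            (fun _ => ENNReal.ofReal (w n) / μ (closedBall (x n) (t n * r n))) y) := by
  have hpq : p.HolderConjugate q := (Real.holderConjugate_iff_eq_conjExponent hp).2 hq
  have hball_fin : ∀ n s, μ (closedBall (x n) s) ≠ ∞ := fun n s =>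
    (hfin _ isBounded_closedBall).ne
  have hball_ne_zero : ∀ n s, 0 < s → μ (closedBall (x n) s) ≠ 0 := fun n s hs =>
    ((hsupp n s hs).trans_le (measure_mono ball_subset_closedBall)).ne'
  have hbig_ne_zero : ∀ n, μ (closedBall (x n) (r n)) ≠ 0 := fun n => hball_ne_zero n _ (hr n)
  choose T hT hdoubling using fun n => exists_mem_Ioo_measure_closedBall_le_two_mul (hr n)
    (hbig_ne_zero n) ⟨r n + 1, by linarith, hball_fin n _⟩
  refine ⟨T, hT, fun t ht w _ => ?_⟩
  have hFp := lintegral_normalizedBallSum_rpow_lt_top hpq.lt.le hbig_ne_zero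
    (fun n => hball_fin n _) w
  obtain ⟨g, hg, hg_mem, hg_norm, hFg⟩ := exists_dual_function hpq
    (measurable_normalizedBallSum w)
    (normalizedBallSum_ne_top hbig_ne_zero w) hFp.ne
  have hdoubling_t : ∀ n, μ (closedBall (x n) (r n + 2 * t n * r n)) ≤
      2 * μ (closedBall (x n) (r n)) := fun n =>
    (measure_mono (closedBall_subset_closedBall (by nlinarith [hr n, ht n]))).trans (hdoubling n)
  obtain ⟨H, hH, hHM, hFGH⟩ := exists_le_centeredMaximal_lintegral_normalizedBallSum_mul_le hr
    (fun n => (ht n).1) hdoubling_t (fun n => hball_ne_zero n _ (mul_pos (ht n).1 (hr n)))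
    (fun n => hball_fin n _) w hg
  refine lpNorm_le_of_lintegral_rpow_le_mul hpq (measurable_normalizedBallSum w).aemeasurable
    hH.aemeasurable hFp.ne (hFg ▸ hFGH) ?_
  calc lpNorm μ q H ≤ lpNorm μ q (centeredMaximal μ g) := lpNorm_mono hpq.symm.nonneg hHM
    _ ≤ C * lpNorm μ q (fun y => ‖g y‖ₑ) := hC g hg_mem
    _ = C * (∫⁻ y, normalizedBallSum μ x r w y ^ p ∂μ) ^ (1 / q) := by rw [hg_norm]

/-- **Centered Boman covering lemma.**  If the centered maximal operator is bounded on `L^q(μ)`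
with constant `C`, then for any finite sequence of closed balls with centers in the support
of `μ` there are contraction factors `T n ∈ (0,1)` such that for all `0 < t n ≤ T n` and all
positive weights `w n`,
`‖ Σ w n 1_{B(x n, r n)}/μ(B(x n, r n)) ‖_p ≤
 2C ‖ Σ w n 1_{B(x n, t n r n)}/μ(B(x n, t n r n)) ‖_p`. -/
theorem centered_boman_covering
    {X : Type*} [MetricSpace X] [MeasurableSpace X] [BorelSpace X]
    (μ : Measure X) (hμ : μ ≠ 0)
    (hfin : ∀ s : Set X, Bornology.IsBounded s → μ s < ∞)
    (p q : ℝ) (hp : 1 < p) (hq : q = p / (p - 1))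
    (C : ℝ≥0∞)
    (hC : ∀ h : X → ℝ, MemLp h (ENNReal.ofReal q) μ →
      lpNorm μ q (centeredMaximal μ h) ≤ C * lpNorm μ q (fun x => (‖h x‖₊ : ℝ≥0∞)))
    (N : ℕ) (x : Fin N → X) (r : Fin N → ℝ)
    (hr : ∀ n, 0 < r n)
    (hsupp : ∀ n, ∀ ε : ℝ, 0 < ε → 0 < μ (ball (x n) ε)) :
    ∃ T : Fin N → ℝ, (∀ n, T n ∈ Set.Ioo (0 : ℝ) 1) ∧
      ∀ t : Fin N → ℝ, (∀ n, 0 < t n ∧ t n ≤ T n) →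
      ∀ w : Fin N → ℝ, (∀ n, 0 < w n) →
        lpNorm μ p (fun y => ∑ n : Fin N, (closedBall (x n) (r n)).indicator
            (fun _ => ENNReal.ofReal (w n) / μ (closedBall (x n) (r n))) y)
          ≤ 2 * C * lpNorm μ p (fun y => ∑ n : Fin N, (closedBall (x n) (t n * r n)).indicator
            (fun _ => ENNReal.ofReal (w n) / μ (closedBall (x n) (t n * r n))) y) :=
  centered_boman_covering_general μ hfin p q hp hq C hC N x r hr hsupp
end
end

section
/- Let (X,d,μ) be a metric measure space with X second countable, let 1 < p < ∞ and q = p/(p-1). Assume (X,d,μ) has the generalized weak q-Boman covering property with constant C. Then the centered maximal operator M_μ is of weak type (p,p) with constant C: for every f ∈ L^p(μ) and every a > 0, μ({M_μ f > a}) ≤ (C‖f‖_{L^p(μ)}/a)^p. -/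
open MeasureTheory Metric ENNReal Set

noncomputable section

/-- The generalized weak `q`-Boman covering property with constant `C`: for every `r > 0`
there is `T r ∈ (0,1)` such that for all finite sequences of closed balls with centers in the
support of `μ`, weights `w n > 0`, contractions `0 < t n ≤ T (r n)`, and sets `E n` of positive
measure with `E n ⊆ B^cl(x n, t n · r n)`, one has
`‖ Σ w n 1_{B(x n, r n)}/μ(B(x n, r n)) ‖_q ≤ C ‖ Σ w n 1_{E n}/μ(E n) ‖_q`. -/
def GeneralizedWeakBomanProperty {X : Type*} [MetricSpace X] [MeasurableSpace X]
    (μ : Measure X) (q : ℝ) (C : ℝ) : Prop :=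
  ∃ T : ℝ → ℝ, (∀ r : ℝ, 0 < r → T r ∈ Set.Ioo (0 : ℝ) 1) ∧
    ∀ (N : ℕ) (x : Fin N → X) (r w t : Fin N → ℝ) (E : Fin N → Set X),
      (∀ n, 0 < r n) →
      (∀ n, ∀ ε : ℝ, 0 < ε → 0 < μ (ball (x n) ε)) →
      (∀ n, 0 < w n) →
      (∀ n, 0 < t n ∧ t n ≤ T (r n)) →
      (∀ n, MeasurableSet (E n)) →
      (∀ n, 0 < μ (E n)) →
      (∀ n, E n ⊆ closedBall (x n) (t n * r n)) →
      lpNorm μ q (fun y => ∑ n : Fin N, (closedBall (x n) (r n)).indicator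
          (fun _ => ENNReal.ofReal (w n) / μ (closedBall (x n) (r n))) y)
        ≤ ENNReal.ofReal C * lpNorm μ q (fun y => ∑ n : Fin N, (E n).indicator
          (fun _ => ENNReal.ofReal (w n) / μ (E n)) y)

/-!
Almost every point `y` of `U = {M_μ f > a}` lies in the support of `μ` and has a radius `r_y`
whose closed ball `B_y` carries `|f|`-average above `a`. By Lindelöf, countably many of the
contracted balls `B(y, T(r_y) r_y)` cover `U ∩ supp μ`; disjointizing them gives pieces `D_n`,
so it suffices to bound `m = Σ μ(D_n)` over finitely many pieces. Testing `|f|` against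
`G = Σ μ(D_n) 1_{B_n} / μ(B_n)` gives `a m ≤ ∫ G |f| ≤ ‖G‖_q ‖f‖_p`, and the Boman property with
`E_n = D_n` and weights `μ(D_n)` gives `‖G‖_q ≤ C ‖1_{⋃ D_n}‖_q = C m^{1/q}`. Since
`1/p + 1/q = 1`, this is `a m^{1/p} ≤ C ‖f‖_p`.
-/

open Topology

section

variable {X : Type*}

lemma le_rpow_div_of_mul_le_mul_rpow {p q : ℝ} (hpq : p.HolderConjugate q) {a m K : ℝ≥0∞}
    (ha₀ : a ≠ 0) (ha : a ≠ ∞) (hm : m ≠ ∞) (h : a * m ≤ K * m ^ (1 / q)) :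
    m ≤ (K / a) ^ p := by
  rcases eq_or_ne m 0 with rfl | hm₀
  · exact zero_le
  have hmq₀ : m ^ (1 / q) ≠ 0 := (ENNReal.rpow_pos (pos_iff_ne_zero.2 hm₀) hm).ne'
  have hmq : m ^ (1 / q) ≠ ∞ := ENNReal.rpow_ne_top_of_nonneg (by simp [hpq.symm.nonneg]) hm
  have hsplit : m = m ^ (1 / p) * m ^ (1 / q) := by
    rw [← ENNReal.rpow_add _ _ hm₀ hm, one_div, one_div, hpq.inv_add_inv_eq_one,
      ENNReal.rpow_one]
  have hroot : m ^ (1 / p) ≤ K / a := by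
    rw [ENNReal.le_div_iff_mul_le (.inl ha₀) (.inl ha), mul_comm,
      ← ENNReal.mul_le_mul_iff_left hmq₀ hmq, mul_assoc, ← hsplit]
    exact h
  calc m = (m ^ (1 / p)) ^ p := by
        rw [← ENNReal.rpow_mul, one_div_mul_cancel hpq.ne_zero, ENNReal.rpow_one]
    _ ≤ (K / a) ^ p := ENNReal.rpow_le_rpow hroot hpq.nonneg

section Measure

variable [MeasurableSpace X] {μ : Measure X}

lemma lpNorm_indicator_one {q : ℝ} (hq : 0 < q) {S : Set X} (hS : MeasurableSet S) :
    lpNorm μ q (S.indicator 1) = μ S ^ (1 / q) := by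
  have hpow : (fun y => S.indicator (1 : X → ℝ≥0∞) y ^ q) = S.indicator 1 := by
    ext y
    by_cases hy : y ∈ S <;> simp [hy, ENNReal.zero_rpow_of_pos hq]
  rw [_root_.lpNorm, hpow, lintegral_indicator_one hS]

lemma mul_le_lintegral_indicator_mul {F : X → ℝ≥0∞} (hF : AEMeasurable F μ) {B : Set X}
    (hBm : MeasurableSet B) (hB₀ : μ B ≠ 0) (hB : μ B ≠ ∞) {a : ℝ≥0∞}
    (havg : a * μ B ≤ ∫⁻ y in B, F y ∂μ) (w : ℝ≥0∞) :
    w * a ≤ ∫⁻ y, B.indicator (fun _ => w / μ B) y * F y ∂μ := by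
  calc w * a = w / μ B * (a * μ B) := by
        rw [mul_comm a, ← mul_assoc, ENNReal.div_mul_cancel hB₀ hB]
    _ ≤ w / μ B * ∫⁻ y in B, F y ∂μ := by gcongr
    _ = ∫⁻ y, B.indicator (fun _ => w / μ B) y * F y ∂μ := by
        rw [← lintegral_const_mul'' _ hF.restrict, ← lintegral_indicator hBm]
        simp_rw [indicator_mul_left]

lemma sum_le_of_lpNorm_sum_indicator_le {p q : ℝ} (hpq : p.HolderConjugate q)
    {F : X → ℝ≥0∞} (hF : AEMeasurable F μ) {a K : ℝ≥0∞} (ha₀ : a ≠ 0) (ha : a ≠ ∞)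
    {ι : Type*} (s : Finset ι) {B : ι → Set X} {w : ι → ℝ≥0∞}
    (hBm : ∀ n ∈ s, MeasurableSet (B n)) (hB₀ : ∀ n ∈ s, μ (B n) ≠ 0)
    (hB : ∀ n ∈ s, μ (B n) ≠ ∞) (hw : ∑ n ∈ s, w n ≠ ∞)
    (havg : ∀ n ∈ s, a * μ (B n) ≤ ∫⁻ y in B n, F y ∂μ)
    (hK : lpNorm μ q (fun y => ∑ n ∈ s, (B n).indicator (fun _ => w n / μ (B n)) y)
      ≤ K * (∑ n ∈ s, w n) ^ (1 / q)) :
    ∑ n ∈ s, w n ≤ (K * lpNorm μ p F / a) ^ p := by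
  set G := fun y => ∑ n ∈ s, (B n).indicator (fun _ => w n / μ (B n)) y
  have hG : AEMeasurable G μ :=
    Finset.aemeasurable_fun_sum s fun n hn => aemeasurable_const.indicator (hBm n hn)
  refine le_rpow_div_of_mul_le_mul_rpow hpq ha₀ ha hw ?_
  calc a * ∑ n ∈ s, w n = ∑ n ∈ s, w n * a := by rw [Finset.mul_sum]; simp_rw [mul_comm]
    _ ≤ ∑ n ∈ s, ∫⁻ y, (B n).indicator (fun _ => w n / μ (B n)) y * F y ∂μ :=
        Finset.sum_le_sum fun n hn =>
          mul_le_lintegral_indicator_mul hF (hBm n hn) (hB₀ n hn) (hB n hn) (havg n hn) _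
    _ = ∫⁻ y, G y * F y ∂μ := by
        rw [← lintegral_finsetSum' s
          (f := fun n y => (B n).indicator (fun _ => w n / μ (B n)) y * F y)
          fun n hn => (aemeasurable_const.indicator (hBm n hn)).mul hF]
        simp_rw [G, Finset.sum_mul]
    _ ≤ lpNorm μ q G * lpNorm μ p F := ENNReal.lintegral_mul_le_Lp_mul_Lq μ hpq.symm hG hF
    _ ≤ K * (∑ n ∈ s, w n) ^ (1 / q) * lpNorm μ p F := by gcongr
    _ = K * lpNorm μ p F * (∑ n ∈ s, w n) ^ (1 / q) := by ring

end Measure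

lemma measure_le_of_forall_sum_measure_le [TopologicalSpace X] [MeasurableSpace X]
    {μ : Measure X} {A : Set X} (hA : IsLindelof A) {V : X → Set X}
    (hV : ∀ x ∈ A, V x ∈ 𝓝 x) (hVm : ∀ x ∈ A, MeasurableSet (V x)) {M : ℝ≥0∞}
    (hM : ∀ (s : Finset ℕ) (e : ℕ → X) (D : ℕ → Set X), (∀ n ∈ s, e n ∈ A) →
      (s : Set ℕ).PairwiseDisjoint D → (∀ n ∈ s, MeasurableSet (D n)) →
      (∀ n ∈ s, 0 < μ (D n)) → (∀ n ∈ s, D n ⊆ V (e n)) → ∑ n ∈ s, μ (D n) ≤ M) :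
    μ A ≤ M := by
  classical
  obtain ⟨t, htc, htA, hAt⟩ := hA.elim_nhds_subcover V hV
  rcases t.eq_empty_or_nonempty with rfl | ht
  · simp_all
  obtain ⟨e, rfl⟩ := htc.exists_eq_range ht
  have heA : ∀ n, e n ∈ A := fun n => htA _ (mem_range_self n)
  set D := disjointed fun n => V (e n)
  have hDm : ∀ n, MeasurableSet (D n) := .disjointed fun n => hVm _ (heA n)
  calc μ A ≤ μ (⋃ n, D n) := measure_mono (by rwa [iUnion_disjointed, ← biUnion_range])
    _ = ∑' n, μ (D n) := measure_iUnion (disjoint_disjointed _) hDm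
    _ ≤ M := by
      refine ENNReal.tsum_eq_iSup_sum ▸ iSup_le fun s => ?_
      rw [← Finset.sum_filter_of_ne (p := fun n => 0 < μ (D n))
        fun n _ h => pos_iff_ne_zero.2 h]
      exact hM _ e D (fun n _ => heA n) ((disjoint_disjointed _).set_pairwise _)
        (fun n _ => hDm n) (fun n hn => (Finset.mem_filter.1 hn).2)
        (fun n _ => disjointed_subset _ n)

section Metric

variable [MetricSpace X] [MeasurableSpace X] {μ : Measure X}

lemma exists_radius_of_lt_centeredMaximal {g : X → ℝ} {a : ℝ≥0∞} {x : X} (ha : a ≠ 0)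
    (h : a < centeredMaximal μ g x) :
    ∃ r, 0 < r ∧ 0 < μ (closedBall x r) ∧
      a * μ (closedBall x r) ≤ ∫⁻ z in closedBall x r, ‖g z‖₊ ∂μ := by
  simp only [centeredMaximal, lt_iSup_iff] at h
  obtain ⟨r, hr, hμr, hlt⟩ := h
  exact ⟨r, hr, hμr, ((ENNReal.lt_div_iff_mul_lt (.inl hμr.ne') (.inr ha)).1 hlt).le⟩

lemma GeneralizedWeakBomanProperty.exists_lpNorm_sum_le [OpensMeasurableSpace X] {q C : ℝ}
    (hq : 0 < q) (hB : GeneralizedWeakBomanProperty μ q C) :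
    ∃ T : ℝ → ℝ, (∀ r, 0 < r → 0 < T r) ∧
      ∀ {ι : Type*} (s : Finset ι) (x : ι → X) (r : ι → ℝ) (D : ι → Set X),
        (∀ n ∈ s, 0 < r n) → (∀ n ∈ s, x n ∈ μ.support) → (s : Set ι).PairwiseDisjoint D →
        (∀ n ∈ s, MeasurableSet (D n)) → (∀ n ∈ s, 0 < μ (D n)) → (∀ n ∈ s, μ (D n) ≠ ∞) →
        (∀ n ∈ s, D n ⊆ closedBall (x n) (T (r n) * r n)) →
        lpNorm μ q (fun y => ∑ n ∈ s, (closedBall (x n) (r n)).indicator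
            (fun _ => μ (D n) / μ (closedBall (x n) (r n))) y)
          ≤ ENNReal.ofReal C * (∑ n ∈ s, μ (D n)) ^ (1 / q) := by
  obtain ⟨T, hT, hBom⟩ := hB
  refine ⟨T, fun r hr => (hT r hr).1, ?_⟩
  intro ι s x r D hr hx hD hDm hD₀ hDtop hDsub
  let σ := s.equivFin.symm
  have hσ : ∀ i, (σ i : ι) ∈ s := fun i => (σ i).2
  have reindex : ∀ g : ι → ℝ≥0∞, ∑ i, g (σ i) = ∑ n ∈ s, g n := fun g => by
    rw [← Finset.sum_coe_sort s]; exact Equiv.sum_comp σ (fun j => g j)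
  have hw : ∀ i, ENNReal.ofReal (μ (D (σ i))).toReal = μ (D (σ i)) :=
    fun i => ofReal_toReal (hDtop _ (hσ i))
  have hone : ∀ i, μ (D (σ i)) / μ (D (σ i)) = 1 :=
    fun i => ENNReal.div_self (hD₀ _ (hσ i)).ne' (hDtop _ (hσ i))
  have hBom' := hBom s.card (fun i => x (σ i)) (fun i => r (σ i))
    (fun i => (μ (D (σ i))).toReal) (fun i => T (r (σ i))) (fun i => D (σ i))
    (fun i => hr _ (hσ i)) (fun i => nhds_basis_ball.mem_measureSupport.1 (hx _ (hσ i)))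
    (fun i => ENNReal.toReal_pos (hD₀ _ (hσ i)).ne' (hDtop _ (hσ i)))
    (fun i => ⟨(hT _ (hr _ (hσ i))).1, le_rfl⟩) (fun i => hDm _ (hσ i))
    (fun i => hD₀ _ (hσ i)) (fun i => hDsub _ (hσ i))
  simp only [hw, hone] at hBom'
  have hunion : (fun y => ∑ i, (D (σ i)).indicator (fun _ => (1 : ℝ≥0∞)) y)
      = (⋃ n ∈ s, D n).indicator 1 := by
    funext y
    rw [Finset.indicator_biUnion_apply s D hD, ← reindex]
    rfl
  rw [hunion, lpNorm_indicator_one hq (s.measurableSet_biUnion hDm),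
    measure_biUnion_finset hD hDm] at hBom'
  convert hBom' using 3
  exact (reindex _).symm

end Metric

end

theorem weak_type_of_generalizedWeakBoman_general
    {X : Type*} [MetricSpace X] [MeasurableSpace X] [BorelSpace X]
    [SecondCountableTopology X]
    (μ : Measure X)
    (hfin : ∀ s : Set X, Bornology.IsBounded s → μ s < ∞)
    (p q : ℝ) (hp : 1 < p) (hq : q = p / (p - 1))
    (C : ℝ)
    (hB : GeneralizedWeakBomanProperty μ q C)
    (f : X → ℝ) (hf : MemLp f (ENNReal.ofReal p) μ)
    (a : ℝ) (ha : 0 < a) :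
    μ {y | ENNReal.ofReal a < centeredMaximal μ f y}
      ≤ (ENNReal.ofReal C * lpNorm μ p (fun y => (‖f y‖₊ : ℝ≥0∞)) / ENNReal.ofReal a) ^ p := by
  have hpq : p.HolderConjugate q := hq ▸ Real.HolderConjugate.conjExponent hp
  have ha₀ : ENNReal.ofReal a ≠ 0 := (ENNReal.ofReal_pos.2 ha).ne'
  have hball : ∀ x r, μ (closedBall x r) ≠ ∞ := fun x r => (hfin _ isBounded_closedBall).ne
  obtain ⟨T, hT, hBom⟩ := hB.exists_lpNorm_sum_le hpq.symm.pos
  choose! R hR₀ hRμ hRavg using fun y (hy : ENNReal.ofReal a < centeredMaximal μ f y) =>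
    exists_radius_of_lt_centeredMaximal ha₀ hy
  rw [← measure_inter_conull Measure.measure_compl_support]
  refine measure_le_of_forall_sum_measure_le (HereditarilyLindelofSpace.isLindelof _)
    (V := fun y => ball y (T (R y) * R y))
    (fun y hy => ball_mem_nhds y (mul_pos (hT _ (hR₀ y hy.1)) (hR₀ y hy.1)))
    (fun _ _ => measurableSet_ball) ?_
  intro s e D he hD hDm hD₀ hDsub
  have hDsub' : ∀ n ∈ s, D n ⊆ closedBall (e n) (T (R (e n)) * R (e n)) :=
    fun n hn => (hDsub n hn).trans ball_subset_closedBall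
  have hDtop : ∀ n ∈ s, μ (D n) ≠ ∞ :=
    fun n hn => ne_top_of_le_ne_top (hball _ _) (measure_mono (hDsub' n hn))
  exact sum_le_of_lpNorm_sum_indicator_le hpq hf.1.enorm ha₀ ofReal_ne_top s
    (fun _ _ => measurableSet_closedBall) (fun n hn => (hRμ _ (he n hn).1).ne')
    (fun _ _ => hball _ _) (ENNReal.sum_ne_top.2 hDtop) (fun n hn => hRavg _ (he n hn).1)
    (hBom s e (R ∘ e) D (fun n hn => hR₀ _ (he n hn).1) (fun n hn => (he n hn).2) hD hDm hD₀
      hDtop hDsub')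

/-- If a (second countable) metric measure space has the generalized weak `q`-Boman covering
property with constant `C`, where `q = p/(p-1)`, then the centered maximal operator is of weak
type `(p,p)` with constant `C`. -/
theorem weak_type_of_generalizedWeakBoman
    {X : Type*} [MetricSpace X] [MeasurableSpace X] [BorelSpace X]
    [SecondCountableTopology X]
    (μ : Measure X) (hμ : μ ≠ 0)
    (hfin : ∀ s : Set X, Bornology.IsBounded s → μ s < ∞)
    (p q : ℝ) (hp : 1 < p) (hq : q = p / (p - 1))
    (C : ℝ) (hC : 0 < C)
    (hB : GeneralizedWeakBomanProperty μ q C)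
    (f : X → ℝ) (hf : MemLp f (ENNReal.ofReal p) μ)
    (a : ℝ) (ha : 0 < a) :
    μ {y | ENNReal.ofReal a < centeredMaximal μ f y}
      ≤ (ENNReal.ofReal C * lpNorm μ p (fun y => (‖f y‖₊ : ℝ≥0∞)) / ENNReal.ofReal a) ^ p :=
  weak_type_of_generalizedWeakBoman_general μ hfin p q hp hq C hB f hf a ha

end
end

section
/- Let X := A ∪ (∪_{n≥0} A_n) ⊂ ℝ², where A = ℝ × {0} and A_n = [4n, 4n + 2^{-n}] × {2^{-n}}, equipped with the metric induced by the ℓ₁ norm on ℝ², and let μ be the Borel measure on X that equals one-dimensional Lebesgue measure on A and 2^{-n} times one-dimensional Lebesgue measure on each A_n (so μ(A_n) = 4^{-n}). Then for every 1 ≤ p < ∞ and every n ≥ 0, ‖M^u_μ 1_{A_n}‖_{L^p(μ)}^p > 2^n ‖1_{A_n}‖_{L^p(μ)}^p; consequently M^u_μ is not of strong type (p,p), nor of weak type (p,p), for any 1 ≤ p < ∞. -/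
open MeasureTheory Metric ENNReal Set

noncomputable section

/-- The plane `ℝ²` with the `ℓ¹` norm (so distances are `|x₁−y₁| + |x₂−y₂|`). -/
abbrev L1Plane := WithLp 1 (ℝ × ℝ)

instance : MeasurableSpace L1Plane := borel L1Plane
instance : BorelSpace L1Plane := ⟨rfl⟩

/-- The point `(s, c)` of the `ℓ¹` plane. -/
def pt (s c : ℝ) : L1Plane := (WithLp.equiv 1 (ℝ × ℝ)).symm (s, c)

/-- The horizontal axis `A = ℝ × {0}`. -/
def lineA : Set L1Plane := {z | (WithLp.equiv 1 (ℝ × ℝ) z).2 = 0}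

/-- The segment `A_n = [4n, 4n + 2^{-n}] × {2^{-n}}`. -/
def segA (n : ℕ) : Set L1Plane :=
  (fun s : ℝ => pt s ((2 : ℝ) ^ (-(n : ℤ)))) '' Icc (4 * (n : ℝ)) (4 * (n : ℝ) + 2 ^ (-(n : ℤ)))

/-- The space `X = A ∪ ⋃_n A_n`, as a subset of the `ℓ¹` plane. -/
def Xset : Set L1Plane := lineA ∪ ⋃ n : ℕ, segA n

/-- The measure on the `ℓ¹` plane which is one-dimensional Lebesgue measure on `A` and
`2^{-n}` times one-dimensional Lebesgue measure on each `A_n`. -/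
def μ₀ : Measure L1Plane :=
  (volume : Measure ℝ).map (fun s => pt s 0) +
    Measure.sum (fun n : ℕ =>
      ENNReal.ofReal ((2 : ℝ) ^ (-(n : ℤ))) •
        ((volume : Measure ℝ).restrict
            (Icc (4 * (n : ℝ)) (4 * (n : ℝ) + 2 ^ (-(n : ℤ)))) |>.map
          (fun s => pt s ((2 : ℝ) ^ (-(n : ℤ))))))

/-- The metric measure space `(X, d, μ)`: `X` carries the metric induced from the `ℓ¹` plane
and the measure `μX` induced (comapped) from `μ₀`. -/
def μX : Measure ↥Xset := μ₀.comap Subtype.val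

/-- The indicator function of `A_n`, as a function on `X`. -/
def indAn (n : ℕ) : ↥Xset → ℝ :=
  Set.indicator {z : ↥Xset | (z : L1Plane) ∈ segA n} (fun _ => (1 : ℝ))

/-!
Put `δ = 2^{-n}`. Every point of `A_n` and of its shadow `F_n = [4n, 4n + δ] × {0}` on the axis lies
within distance `δ` of a point `y ∈ A_n`, and the ball `B(y, δ + ε)` contains `A_n`, meets the axis
in an interval of length `2ε` and misses all other segments. Its `1_{A_n}`-average `δ²/(2ε + δ²)`
tends to `1` as `ε → 0`, so `M^u 1_{A_n} ≥ 1` on `A_n ∪ F_n`, a set of measure `δ + δ²`, whereas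
`‖1_{A_n}‖_p^p = δ² = 2^{-n} δ`. As `2^n → ∞`, this rules out a strong `(p,p)` bound, and
(at height `1/2`) a weak one.
-/

open Filter Topology

section MaximalOperator

lemma coe_nnnorm_indicator_one {X : Type*} (S : Set X) (x : X) :
    (‖S.indicator (fun _ => (1 : ℝ)) x‖₊ : ℝ≥0∞) = S.indicator 1 x := by
  by_cases hx : x ∈ S <;> simp [hx]

variable {X : Type*} [MeasurableSpace X] {μ : Measure X} {p : ℝ}

lemma lpNorm_rpow (hp : p ≠ 0) (F : X → ℝ≥0∞) : lpNorm μ p F ^ p = ∫⁻ x, F x ^ p ∂μ := by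
  rw [_root_.lpNorm, one_div, ENNReal.rpow_inv_rpow hp]

lemma lintegral_rpow_le_of_lpNorm_le (hp : 0 < p) {F G : X → ℝ≥0∞} {C : ℝ≥0∞}
    (h : lpNorm μ p F ≤ C * lpNorm μ p G) :
    ∫⁻ x, F x ^ p ∂μ ≤ C ^ p * ∫⁻ x, G x ^ p ∂μ := by
  have h' := ENNReal.rpow_le_rpow h hp.le
  rwa [ENNReal.mul_rpow_of_nonneg _ _ hp.le, lpNorm_rpow hp.ne', lpNorm_rpow hp.ne'] at h'

lemma mul_lpNorm_div_rpow (hp : 0 < p) (C α : ℝ≥0∞) (G : X → ℝ≥0∞) :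
    (C * lpNorm μ p G / α) ^ p = (C / α) ^ p * ∫⁻ x, G x ^ p ∂μ := by
  rw [div_eq_mul_inv, mul_right_comm, ← div_eq_mul_inv, ENNReal.mul_rpow_of_nonneg _ _ hp.le,
    lpNorm_rpow hp.ne']

lemma measure_le_lintegral_rpow_of_one_le {S : Set X} (hS : MeasurableSet S) (hp : 0 < p)
    {F : X → ℝ≥0∞} (hF : ∀ x ∈ S, 1 ≤ F x) : μ S ≤ ∫⁻ x, F x ^ p ∂μ :=
  calc μ S = ∫⁻ _ in S, 1 ∂μ := (setLIntegral_one S).symm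
    _ ≤ ∫⁻ x in S, F x ^ p ∂μ :=
      setLIntegral_mono' hS fun x hx => ENNReal.one_le_rpow (hF x hx) hp
    _ ≤ ∫⁻ x, F x ^ p ∂μ := setLIntegral_le_lintegral S _

lemma lintegral_nnnorm_indicator_one_rpow {S : Set X} (hS : MeasurableSet S) (hp : 0 < p) :
    ∫⁻ x, (‖S.indicator (fun _ => (1 : ℝ)) x‖₊ : ℝ≥0∞) ^ p ∂μ = μ S := by
  have h : ∀ x, (‖S.indicator (fun _ => (1 : ℝ)) x‖₊ : ℝ≥0∞) ^ p = S.indicator 1 x := fun x => by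
    by_cases hx : x ∈ S <;> simp [hx, hp]
  simp_rw [h, lintegral_indicator_one hS]

lemma setLIntegral_nnnorm_indicator_one {S : Set X} (hS : MeasurableSet S) (B : Set X) :
    ∫⁻ x in B, ‖S.indicator (fun _ => (1 : ℝ)) x‖₊ ∂μ = μ (S ∩ B) := by
  simp_rw [coe_nnnorm_indicator_one, lintegral_indicator_one hS, Measure.restrict_apply hS]

lemma not_forall_le_mul_of_two_pow_mul_lt {K : ℝ≥0∞} (hK : K ≠ ∞) {a b : ℕ → ℝ≥0∞}
    (hlt : ∀ n, 2 ^ n * a n < b n) : ¬ ∀ n, b n ≤ K * a n := by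
  intro hle
  obtain ⟨n, hn⟩ := ENNReal.exists_nat_gt hK
  have hK2 : K ≤ 2 ^ n := hn.le.trans (by exact_mod_cast Nat.lt_two_pow_self.le)
  exact (hlt n).not_ge ((hle n).trans (mul_le_mul_left hK2 _))

lemma not_strongType_of_two_pow_mul_lt (hp : 0 < p) (T : (X → ℝ) → X → ℝ≥0∞)
    (g : ℕ → X → ℝ) (hg : ∀ n, MemLp (g n) (ENNReal.ofReal p) μ)
    (hgrow : ∀ n, 2 ^ n * ∫⁻ x, (‖g n x‖₊ : ℝ≥0∞) ^ p ∂μ < ∫⁻ x, T (g n) x ^ p ∂μ) :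
    ¬ ∃ c : ℝ, 0 ≤ c ∧ ∀ f : X → ℝ, MemLp f (ENNReal.ofReal p) μ →
      lpNorm μ p (T f) ≤ ENNReal.ofReal c * lpNorm μ p (fun x => (‖f x‖₊ : ℝ≥0∞)) := by
  rintro ⟨c, -, hc⟩
  exact not_forall_le_mul_of_two_pow_mul_lt
    (ENNReal.rpow_ne_top_of_nonneg hp.le ENNReal.ofReal_ne_top) hgrow
    fun n => lintegral_rpow_le_of_lpNorm_le hp (hc _ (hg n))

lemma not_weakType_of_two_pow_mul_lt (hp : 0 < p) (T : (X → ℝ) → X → ℝ≥0∞)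
    (g : ℕ → X → ℝ) (hg : ∀ n, MemLp (g n) (ENNReal.ofReal p) μ) {t : ℝ≥0∞} (ht : 0 < t)
    (hgrow : ∀ n, 2 ^ n * ∫⁻ x, (‖g n x‖₊ : ℝ≥0∞) ^ p ∂μ < μ {x | t < T (g n) x}) :
    ¬ ∃ c : ℝ, 0 ≤ c ∧ ∀ f : X → ℝ, MemLp f (ENNReal.ofReal p) μ → ∀ α : ℝ≥0∞, 0 < α →
      μ {x | α < T f x}
        ≤ (ENNReal.ofReal c * lpNorm μ p (fun x => (‖f x‖₊ : ℝ≥0∞)) / α) ^ p := by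
  rintro ⟨c, -, hc⟩
  refine not_forall_le_mul_of_two_pow_mul_lt (K := (ENNReal.ofReal c / t) ^ p) ?_ hgrow
    fun n => (hc _ (hg n) t ht).trans_eq (mul_lpNorm_div_rpow hp _ _ _)
  exact ENNReal.rpow_ne_top_of_nonneg hp.le (ENNReal.div_ne_top ENNReal.ofReal_ne_top ht.ne')

end MaximalOperator

lemma setLIntegral_div_le_uncenteredMaximal {X : Type*} [MetricSpace X] [MeasurableSpace X]
    {μ : Measure X} (g : X → ℝ) {x y : X} {r : ℝ} (hxy : dist x y < r)
    (hμ : 0 < μ (closedBall y r)) :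
    (∫⁻ z in closedBall y r, ‖g z‖₊ ∂μ) / μ (closedBall y r) ≤ uncenteredMaximal μ g x :=
  le_iSup₂_of_le y r <| le_iSup₂_of_le (dist_nonneg.trans_lt hxy) hxy <| le_iSup_of_le hμ le_rfl

def δ (n : ℕ) : ℝ := 2 ^ (-(n : ℤ))

def baseIcc (n : ℕ) : Set ℝ := Icc (4 * (n : ℝ)) (4 * (n : ℝ) + δ n)

def shadow (n : ℕ) : Set L1Plane := (fun s => pt s 0) '' baseIcc n

lemma δ_eq (n : ℕ) : δ n = ((2 : ℝ) ^ n)⁻¹ := by rw [δ, zpow_neg, zpow_natCast]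

lemma δ_pos (n : ℕ) : 0 < δ n := by rw [δ_eq]; positivity

lemma δ_le_one (n : ℕ) : δ n ≤ 1 := by
  rw [δ_eq]; exact inv_le_one_of_one_le₀ (one_le_pow₀ one_le_two)

lemma δ_injective : Function.Injective δ := fun m n h => by
  rw [δ_eq, δ_eq, inv_inj] at h
  exact Nat.pow_right_injective le_rfl (by exact_mod_cast h)

lemma two_pow_mul_δ (n : ℕ) : (2 : ℝ) ^ n * δ n = 1 := by
  rw [δ_eq, mul_inv_cancel₀ (by positivity)]

lemma volume_baseIcc (n : ℕ) : volume (baseIcc n) = ENNReal.ofReal (δ n) := by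
  rw [baseIcc, Real.volume_Icc, add_sub_cancel_left]

lemma three_le_abs_sub_of_mem_baseIcc {m n : ℕ} (hmn : m ≠ n) {s t : ℝ} (hs : s ∈ baseIcc m)
    (ht : t ∈ baseIcc n) : 3 ≤ |s - t| := by
  obtain ⟨hs₁, hs₂⟩ := hs
  obtain ⟨ht₁, ht₂⟩ := ht
  have := δ_le_one m
  have := δ_le_one n
  rcases hmn.lt_or_gt with h | h
  · have : (m : ℝ) + 1 ≤ n := by exact_mod_cast h
    exact le_abs.2 (Or.inr (by linarith))
  · have : (n : ℝ) + 1 ≤ m := by exact_mod_cast h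
    exact le_abs.2 (Or.inl (by linarith))

lemma pt_inj {a b c d : ℝ} : pt a b = pt c d ↔ a = c ∧ b = d :=
  (WithLp.equiv 1 (ℝ × ℝ)).symm.injective.eq_iff.trans Prod.mk_inj

lemma dist_pt_pt (a b c d : ℝ) : dist (pt a b) (pt c d) = |a - c| + |b - d| := by
  rw [WithLp.prod_dist_eq_add (by norm_num : 0 < (1 : ℝ≥0∞).toReal)]
  simp [pt, Real.dist_eq]

lemma continuous_pt (c : ℝ) : Continuous fun s => pt s c :=
  (WithLp.prod_continuous_toLp 1 ℝ ℝ).comp (continuous_id.prodMk continuous_const)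

lemma segA_eq (n : ℕ) : segA n = (fun s => pt s (δ n)) '' baseIcc n := rfl

lemma pt_mem_segA_iff {s c : ℝ} {n : ℕ} : pt s c ∈ segA n ↔ c = δ n ∧ s ∈ baseIcc n := by
  refine ⟨fun ⟨t, ht, h⟩ => ?_, fun ⟨hc, hs⟩ => ⟨s, hs, hc ▸ rfl⟩⟩
  obtain ⟨rfl, rfl⟩ := pt_inj.1 h
  exact ⟨rfl, ht⟩

lemma pt_mem_shadow_iff {s c : ℝ} {n : ℕ} : pt s c ∈ shadow n ↔ c = 0 ∧ s ∈ baseIcc n := by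
  refine ⟨fun ⟨t, ht, h⟩ => ?_, fun ⟨hc, hs⟩ => ⟨s, hs, hc ▸ rfl⟩⟩
  obtain ⟨rfl, rfl⟩ := pt_inj.1 h
  exact ⟨rfl, ht⟩

lemma pt_mem_Xset_of_mem_baseIcc {s : ℝ} {n : ℕ} (hs : s ∈ baseIcc n) : pt s (δ n) ∈ Xset :=
  Or.inr (mem_iUnion.2 ⟨n, pt_mem_segA_iff.2 ⟨rfl, hs⟩⟩)

lemma measurableSet_segA (n : ℕ) : MeasurableSet (segA n) :=
  (isCompact_Icc.image (continuous_pt _)).isClosed.measurableSet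

lemma measurableSet_shadow (n : ℕ) : MeasurableSet (shadow n) :=
  (isCompact_Icc.image (continuous_pt 0)).isClosed.measurableSet

lemma μ₀_apply {E : Set L1Plane} (hE : MeasurableSet E) :
    μ₀ E = volume ((fun s => pt s 0) ⁻¹' E)
      + ∑' m, ENNReal.ofReal (δ m) * volume ((fun s => pt s (δ m)) ⁻¹' E ∩ baseIcc m) := by
  rw [μ₀, Measure.add_apply, Measure.map_apply (continuous_pt 0).measurable hE,
    Measure.sum_apply _ hE]
  congr 1
  refine tsum_congr fun m => ?_
  rw [Measure.smul_apply, Measure.map_apply (continuous_pt _).measurable hE,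
    Measure.restrict_apply ((continuous_pt _).measurable hE)]
  rfl

lemma measurableSet_Xset : MeasurableSet Xset :=
  (isClosed_eq (continuous_snd.comp (WithLp.prod_continuous_ofLp 1 ℝ ℝ)) continuous_const
    |>.measurableSet).union (.iUnion measurableSet_segA)

lemma μ₀_compl_Xset : μ₀ Xsetᶜ = 0 := by
  rw [μ₀_apply measurableSet_Xset.compl]
  have hA : (fun s => pt s 0) ⁻¹' Xsetᶜ = ∅ := eq_empty_of_forall_notMem fun s hs => hs (Or.inl rfl)
  have hAm : ∀ m, (fun s => pt s (δ m)) ⁻¹' Xsetᶜ ∩ baseIcc m = ∅ := fun m =>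
    eq_empty_of_forall_notMem fun s ⟨hs, hm⟩ => hs (pt_mem_Xset_of_mem_baseIcc hm)
  simp only [hA, hAm, measure_empty, mul_zero, tsum_zero, add_zero]

lemma μX_preimage (E : Set L1Plane) :
    μX (Subtype.val ⁻¹' E) = μ₀ E := by
  rw [μX, comap_subtype_coe_apply measurableSet_Xset, Subtype.image_preimage_coe,
    inter_comm, measure_inter_conull μ₀_compl_Xset]

lemma μ₀_eq_of_segA_subset_of_disjoint {E : Set L1Plane} (hE : MeasurableSet E) {n : ℕ}
    (hn : segA n ⊆ E) (hm : ∀ m ≠ n, Disjoint (segA m) E) :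
    μ₀ E = volume ((fun s => pt s 0) ⁻¹' E) + ENNReal.ofReal (δ n * δ n) := by
  have hIcc : baseIcc n ⊆ (fun s => pt s (δ n)) ⁻¹' E := fun s hs =>
    hn (pt_mem_segA_iff.2 ⟨rfl, hs⟩)
  rw [μ₀_apply hE, tsum_eq_single n fun m hmn => ?_, inter_eq_right.2 hIcc, volume_baseIcc,
    ENNReal.ofReal_mul (δ_pos n).le]
  have hempty : (fun s => pt s (δ m)) ⁻¹' E ∩ baseIcc m = ∅ :=
    eq_empty_of_forall_notMem fun s hs =>
      (hm m hmn).notMem_of_mem_left (pt_mem_segA_iff.2 ⟨rfl, hs.2⟩) hs.1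
  rw [hempty, measure_empty, mul_zero]

lemma eq_of_mem_segA_of_mem_segA {m n : ℕ} {z : L1Plane} (hm : z ∈ segA m) (hn : z ∈ segA n) :
    m = n := by
  obtain ⟨s, -, rfl⟩ := hm
  exact δ_injective (pt_mem_segA_iff.1 hn).1

lemma μ₀_segA (n : ℕ) : μ₀ (segA n) = ENNReal.ofReal (δ n * δ n) := by
  have hA : (fun s => pt s 0) ⁻¹' segA n = ∅ :=
    eq_empty_of_forall_notMem fun s hs => (δ_pos n).ne (pt_mem_segA_iff.1 hs).1
  rw [μ₀_eq_of_segA_subset_of_disjoint (measurableSet_segA n) subset_rfl fun m hmn =>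
    disjoint_left.2 fun z hm hn => hmn (eq_of_mem_segA_of_mem_segA hm hn), hA, measure_empty,
    zero_add]

lemma μ₀_segA_union_shadow (n : ℕ) :
    μ₀ (segA n ∪ shadow n) = ENNReal.ofReal (δ n + δ n * δ n) := by
  have hA : (fun s => pt s 0) ⁻¹' (segA n ∪ shadow n) = baseIcc n := by
    ext s
    simp [pt_mem_segA_iff, pt_mem_shadow_iff, (δ_pos n).ne]
  have hdisj : ∀ m ≠ n, Disjoint (segA m) (segA n ∪ shadow n) := fun m hmn =>
    disjoint_left.2 fun z hm hz => hz.elim (hmn <| eq_of_mem_segA_of_mem_segA hm ·) fun hs => by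
      obtain ⟨s, -, rfl⟩ := hm
      exact (δ_pos m).ne' (pt_mem_shadow_iff.1 hs).1
  rw [μ₀_eq_of_segA_subset_of_disjoint ((measurableSet_segA n).union (measurableSet_shadow n))
    subset_union_left hdisj, hA, volume_baseIcc,
    ← ENNReal.ofReal_add (δ_pos n).le (by positivity [δ_pos n])]

lemma abs_sub_le_δ {n : ℕ} {s t : ℝ} (hs : s ∈ baseIcc n) (ht : t ∈ baseIcc n) :
    |s - t| ≤ δ n :=
  abs_sub_le_iff.2 ⟨by linarith [hs.2, ht.1], by linarith [hs.1, ht.2]⟩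

lemma segA_subset_closedBall {n : ℕ} {s₀ ε : ℝ} (hs₀ : s₀ ∈ baseIcc n) (hε : 0 ≤ ε) :
    segA n ⊆ closedBall (pt s₀ (δ n)) (δ n + ε) := by
  rw [segA_eq]
  rintro _ ⟨s, hs, rfl⟩
  rw [mem_closedBall, dist_pt_pt, sub_self, abs_zero, add_zero]
  linarith [abs_sub_le_δ hs hs₀]

lemma μ₀_closedBall {n : ℕ} {s₀ ε : ℝ} (hs₀ : s₀ ∈ baseIcc n) (hε : 0 < ε) (hε₁ : ε ≤ 1) :
    μ₀ (closedBall (pt s₀ (δ n)) (δ n + ε)) = ENNReal.ofReal (2 * ε + δ n * δ n) := by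
  have hA : (fun s => pt s 0) ⁻¹' closedBall (pt s₀ (δ n)) (δ n + ε) = closedBall s₀ ε := by
    ext s
    simp [dist_pt_pt, Real.dist_eq, abs_of_pos (δ_pos n), add_comm _ (δ n)]
  have hdisj : ∀ m ≠ n, Disjoint (segA m) (closedBall (pt s₀ (δ n)) (δ n + ε)) := by
    refine fun m hmn => disjoint_left.2 ?_
    rw [segA_eq]
    rintro _ ⟨s, hs, rfl⟩ hball
    rw [mem_closedBall, dist_pt_pt] at hball
    linarith [three_le_abs_sub_of_mem_baseIcc hmn hs hs₀, abs_nonneg (δ m - δ n), δ_le_one n]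
  rw [μ₀_eq_of_segA_subset_of_disjoint measurableSet_closedBall (segA_subset_closedBall hs₀ hε.le) hdisj, hA,
    Real.volume_closedBall, ← ENNReal.ofReal_add (by positivity) (by positivity [δ_pos n])]

lemma indAn_eq (n : ℕ) : indAn n = (Subtype.val ⁻¹' segA n).indicator fun _ => 1 := rfl

lemma μX_segA (n : ℕ) : μX (Subtype.val ⁻¹' segA n) = ENNReal.ofReal (δ n * δ n) := by
  rw [μX_preimage, μ₀_segA]

lemma lintegral_indAn_rpow (n : ℕ) {p : ℝ} (hp : 0 < p) :
    ∫⁻ z, (‖indAn n z‖₊ : ℝ≥0∞) ^ p ∂μX = ENNReal.ofReal (δ n * δ n) := by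
  rw [indAn_eq, lintegral_nnnorm_indicator_one_rpow
    (measurable_subtype_coe (measurableSet_segA n)) hp, μX_segA]

lemma memLp_indAn (n : ℕ) (q : ℝ≥0∞) : MemLp (indAn n) q μX :=
  memLp_indicator_const q (measurable_subtype_coe (measurableSet_segA n)) 1
    (Or.inr (by rw [μX_segA]; exact ENNReal.ofReal_ne_top))

lemma ofReal_div_le_uncenteredMaximal_indAn {n : ℕ} {s₀ : ℝ} (hs₀ : s₀ ∈ baseIcc n)
    {z : ↥Xset} (hz : dist (z : L1Plane) (pt s₀ (δ n)) ≤ δ n) {ε : ℝ} (hε : 0 < ε)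
    (hε₁ : ε ≤ 1) :
    ENNReal.ofReal (δ n * δ n / (2 * ε + δ n * δ n)) ≤ uncenteredMaximal μX (indAn n) z := by
  let y : ↥Xset := ⟨pt s₀ (δ n), pt_mem_Xset_of_mem_baseIcc hs₀⟩
  have hball : closedBall y (δ n + ε) = Subtype.val ⁻¹' closedBall (pt s₀ (δ n)) (δ n + ε) :=
    rfl
  have hμ : μX (closedBall y (δ n + ε)) = ENNReal.ofReal (2 * ε + δ n * δ n) := by
    rw [hball, μX_preimage, μ₀_closedBall hs₀ hε hε₁]
  have hsub : Subtype.val ⁻¹' segA n ⊆ closedBall y (δ n + ε) :=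
    hball ▸ preimage_mono (segA_subset_closedBall hs₀ hε.le)
  have hzy : dist z y < δ n + ε := hz.trans_lt (lt_add_of_pos_right _ hε)
  calc ENNReal.ofReal (δ n * δ n / (2 * ε + δ n * δ n))
      = (∫⁻ w in closedBall y (δ n + ε), ‖indAn n w‖₊ ∂μX) / μX (closedBall y (δ n + ε)) := by
        rw [indAn_eq, setLIntegral_nnnorm_indicator_one
          (measurable_subtype_coe (measurableSet_segA n)), inter_eq_left.2 hsub, μX_segA, hμ,
          ENNReal.ofReal_div_of_pos (by positivity [δ_pos n])]
    _ ≤ uncenteredMaximal μX (indAn n) z :=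
        setLIntegral_div_le_uncenteredMaximal _ hzy (by rw [hμ]; positivity [δ_pos n])

lemma one_le_uncenteredMaximal_indAn {n : ℕ} {z : ↥Xset}
    (hz : (z : L1Plane) ∈ segA n ∪ shadow n) : 1 ≤ uncenteredMaximal μX (indAn n) z := by
  obtain ⟨s₀, hs₀, hz⟩ : ∃ s₀ ∈ baseIcc n, dist (z : L1Plane) (pt s₀ (δ n)) ≤ δ n := by
    rw [segA_eq] at hz
    rcases hz with ⟨s, hs, hzs⟩ | ⟨s, hs, hzs⟩ <;> refine ⟨s, hs, ?_⟩ <;>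
      simp [← hzs, dist_pt_pt, abs_of_pos (δ_pos n), (δ_pos n).le]
  have hc : δ n * δ n ≠ 0 := by positivity [δ_pos n]
  have hcont : ContinuousAt (fun ε : ℝ => δ n * δ n / (2 * ε + δ n * δ n)) 0 := by
    fun_prop (disch := simpa using hc)
  have hlim : Tendsto (fun ε : ℝ => ENNReal.ofReal (δ n * δ n / (2 * ε + δ n * δ n)))
      (𝓝[>] 0) (𝓝 1) := by
    simpa [hc] using (ENNReal.tendsto_ofReal hcont.tendsto).mono_left nhdsWithin_le_nhds
  refine le_of_tendsto hlim ?_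
  filter_upwards [Ioc_mem_nhdsGT zero_lt_one] with ε hε
  exact ofReal_div_le_uncenteredMaximal_indAn hs₀ hz hε.1 hε.2

lemma two_pow_mul_μX_segA_lt (n : ℕ) :
    2 ^ n * μX (Subtype.val ⁻¹' segA n) < μX (Subtype.val ⁻¹' (segA n ∪ shadow n)) := by
  have h : (2 : ℝ≥0∞) ^ n * ENNReal.ofReal (δ n * δ n) = ENNReal.ofReal (δ n) := by
    rw [← ENNReal.ofReal_ofNat 2, ← ENNReal.ofReal_pow zero_le_two,
      ← ENNReal.ofReal_mul (by positivity), ← mul_assoc, two_pow_mul_δ, one_mul]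
  rw [μX_segA, μX_preimage, μ₀_segA_union_shadow, h,
    ENNReal.ofReal_lt_ofReal_iff (by positivity [δ_pos n])]
  exact lt_add_of_pos_right _ (by positivity [δ_pos n])
/-- On the space `X = A ∪ ⋃_n A_n` of Example 13 (with the `ℓ¹` metric and the measure that is
Lebesgue on `A` and `2^{-n}`·Lebesgue on `A_n`), for every `1 ≤ p < ∞` and every `n`,
`‖M^u 1_{A_n}‖_p^p > 2^n ‖1_{A_n}‖_p^p`; consequently `M^u` is of neither strong nor weak type
`(p,p)` for any `1 ≤ p < ∞`. -/
theorem maximal_unbounded_on_example :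
    (∀ p : ℝ, 1 ≤ p → ∀ n : ℕ,
      (2 : ℝ≥0∞) ^ n * (∫⁻ z, ((‖indAn n z‖₊ : ℝ≥0∞)) ^ p ∂μX)
        < ∫⁻ z, (uncenteredMaximal μX (indAn n) z) ^ p ∂μX) ∧
    (∀ p : ℝ, 1 ≤ p →
      ¬ ∃ c : ℝ, 0 ≤ c ∧ ∀ g : ↥Xset → ℝ, MemLp g (ENNReal.ofReal p) μX →
        lpNorm μX p (uncenteredMaximal μX g)
          ≤ ENNReal.ofReal c * lpNorm μX p (fun z => (‖g z‖₊ : ℝ≥0∞))) ∧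
    (∀ p : ℝ, 1 ≤ p →
      ¬ ∃ c : ℝ, 0 ≤ c ∧ ∀ g : ↥Xset → ℝ, MemLp g (ENNReal.ofReal p) μX →
        ∀ α : ℝ≥0∞, 0 < α →
          μX {z | α < uncenteredMaximal μX g z}
            ≤ (ENNReal.ofReal c * lpNorm μX p (fun z => (‖g z‖₊ : ℝ≥0∞)) / α) ^ p) := by
  have hU : ∀ n, MeasurableSet (Subtype.val ⁻¹' (segA n ∪ shadow n) : Set ↥Xset) := fun n =>
    measurable_subtype_coe ((measurableSet_segA n).union (measurableSet_shadow n))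
  have hgrow : ∀ p : ℝ, 0 < p → ∀ n, 2 ^ n * ∫⁻ z, (‖indAn n z‖₊ : ℝ≥0∞) ^ p ∂μX
      < μX (Subtype.val ⁻¹' (segA n ∪ shadow n)) := fun p hp n => by
    rw [lintegral_indAn_rpow n hp, ← μX_segA]
    exact two_pow_mul_μX_segA_lt n
  have hstrong : ∀ p : ℝ, 1 ≤ p → ∀ n : ℕ, 2 ^ n * ∫⁻ z, (‖indAn n z‖₊ : ℝ≥0∞) ^ p ∂μX
      < ∫⁻ z, uncenteredMaximal μX (indAn n) z ^ p ∂μX := fun p hp n =>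
    (hgrow p (by linarith) n).trans_le <| measure_le_lintegral_rpow_of_one_le (hU n)
      (by linarith) fun _ hz => one_le_uncenteredMaximal_indAn hz
  refine ⟨hstrong, fun p hp => ?_, fun p hp => ?_⟩
  · exact not_strongType_of_two_pow_mul_lt (by linarith) _ indAn (fun n => memLp_indAn n _)
      (hstrong p hp)
  · refine not_weakType_of_two_pow_mul_lt (by linarith) _ indAn (fun n => memLp_indAn n _)
      (t := 2⁻¹) (by norm_num) fun n => (hgrow p (by linarith) n).trans_le (measure_mono ?_)
    exact fun _ hz => (by norm_num : (2⁻¹ : ℝ≥0∞) < 1).trans_le (one_le_uncenteredMaximal_indAn hz)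

end
end
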